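/- arXiv:2403.11837 — 10 statements merged into one kernel-verified Lean document; each statement's English description precedes it below -/
import Mathlib

section
/- Let R be a ring and x ∈ R a regular element with inner inverse x'. The following are equivalent: (1) xR is isomorphic to a direct summand of R/xR; (2) for every submodule Y of R_R with xR ⊕ Y = R_R, xR is isomorphic to a direct summand of Y; (3) xx'R is isomorphic to a direct summand of (1−xx')R; (4) Rxx' is isomorphic to a direct summand of R(1−xx'). -/
/-- `M` is isomorphic to a direct summand of `N` (as `S`-modules). -/
def IsoToSummand (S : Type*) [Ring S] (M N : Type*) [AddCommGroup M] [AddCommGroup N]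
    [Module S M] [Module S N] : Prop :=
  ∃ P Q : Submodule S N, IsCompl P Q ∧ Nonempty (M ≃ₗ[S] P)

section Aux

variable {S : Type*} [Ring S] {M N N' : Type*} [AddCommGroup M] [AddCommGroup N]
  [AddCommGroup N'] [Module S M] [Module S N] [Module S N']

/-- A module is isomorphic to a direct summand iff it is a retract. -/
theorem isoToSummand_iff_retract :
    IsoToSummand S M N ↔ ∃ (i : M →ₗ[S] N) (p : N →ₗ[S] M), p.comp i = LinearMap.id := by
  constructor
  · rintro ⟨P, Q, hc, ⟨f⟩⟩
    refine ⟨P.subtype.comp f.toLinearMap,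
      f.symm.toLinearMap.comp (P.projectionOnto Q hc), ?_⟩
    ext m
    simp
  · rintro ⟨i, p, h⟩
    have hpi : ∀ m, p (i m) = m := fun m => by
      have := LinearMap.congr_fun h m; simpa using this
    have hinj : Function.Injective i := fun m m' hm => by
      have : p (i m) = p (i m') := by rw [hm]
      rwa [hpi, hpi] at this
    refine ⟨LinearMap.range i, LinearMap.ker p, ⟨?_, ?_⟩,
      ⟨LinearEquiv.ofInjective i hinj⟩⟩
    · rw [disjoint_iff_inf_le]
      rintro z ⟨⟨m, rfl⟩, hz2⟩
      have : p (i m) = 0 := hz2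
      rw [hpi] at this
      simp [this]
    · rw [codisjoint_iff, eq_top_iff]
      rintro z -
      refine Submodule.mem_sup.mpr ⟨i (p z), ⟨p z, rfl⟩, z - i (p z), ?_, by abel⟩
      have : p (z - i (p z)) = 0 := by
        rw [map_sub, hpi, sub_self]
      exact this

theorem isoToSummand_congr (eq : N ≃ₗ[S] N') :
    IsoToSummand S M N → IsoToSummand S M N' := by
  rw [isoToSummand_iff_retract, isoToSummand_iff_retract]
  rintro ⟨i, p, h⟩
  refine ⟨eq.toLinearMap.comp i, p.comp eq.symm.toLinearMap, ?_⟩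
  ext m
  have := LinearMap.congr_fun h m
  simpa using this

end Aux

section Idem

variable {R : Type*} [Ring R]

theorem mul_eq_self_of_mem_op_span {c y : R} (hc : c * c = c)
    (hy : y ∈ Submodule.span Rᵐᵒᵖ ({c} : Set R)) : c * y = y := by
  obtain ⟨r, rfl⟩ := Submodule.mem_span_singleton.mp hy
  rw [← MulOpposite.op_unop r, op_smul_eq_mul, ← mul_assoc, hc]

theorem mul_eq_self_of_mem_span {c y : R} (hc : c * c = c)
    (hy : y ∈ Submodule.span R ({c} : Set R)) : y * c = y := by
  obtain ⟨r, rfl⟩ := Submodule.mem_span_singleton.mp hy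
  rw [smul_eq_mul, mul_assoc, hc]

theorem one_sub_idem {e : R} (he : e * e = e) : (1 - e) * (1 - e) = 1 - e := by
  have h : (1 - e) * (1 - e) = 1 - e - e + e * e := by noncomm_ring
  rw [h, he]; abel

theorem isCompl_span_idem {e : R} (he : e * e = e) :
    IsCompl (Submodule.span Rᵐᵒᵖ ({e} : Set R)) (Submodule.span Rᵐᵒᵖ ({1 - e} : Set R)) := by
  constructor
  · rw [disjoint_iff_inf_le]
    rintro z ⟨hz1, hz2⟩
    have h1 : e * z = z := mul_eq_self_of_mem_op_span he hz1
    have h2 : (1 - e) * z = z := mul_eq_self_of_mem_op_span (one_sub_idem he) hz2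
    rw [sub_mul, one_mul, h1, sub_self] at h2
    simpa using h2.symm
  · rw [codisjoint_iff, eq_top_iff]
    rintro z -
    refine Submodule.mem_sup.mpr ⟨e * z, ?_, (1 - e) * z, ?_, ?_⟩
    · exact Submodule.mem_span_singleton.mpr ⟨MulOpposite.op z, op_smul_eq_mul _ _⟩
    · exact Submodule.mem_span_singleton.mpr ⟨MulOpposite.op z, op_smul_eq_mul _ _⟩
    · rw [sub_mul, one_mul]; abel

/-- The element-wise condition equivalent to both (3) and (4). -/
def RepCond (e : R) : Prop :=
  ∃ a b : R, a * b = e ∧ e * a = a ∧ b * e = b ∧ e * b = 0 ∧ a * e = 0 ∧ b * a * b = b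

theorem right_iff_repCond {e : R} (he : e * e = e) :
    IsoToSummand Rᵐᵒᵖ (Submodule.span Rᵐᵒᵖ ({e} : Set R))
      (Submodule.span Rᵐᵒᵖ ({1 - e} : Set R)) ↔ RepCond e := by
  rw [isoToSummand_iff_retract]
  constructor
  · rintro ⟨i, p, h⟩
    have hmem_e : e ∈ Submodule.span Rᵐᵒᵖ ({e} : Set R) :=
      Submodule.mem_span_singleton_self e
    have hmem_1e : (1 - e) ∈ Submodule.span Rᵐᵒᵖ ({1 - e} : Set R) :=
      Submodule.mem_span_singleton_self _
    set b₀ : R := (i ⟨e, hmem_e⟩ : R) with hb₀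
    set a₀ : R := (p ⟨1 - e, hmem_1e⟩ : R) with ha₀
    have hb₀mem : (1 - e) * b₀ = b₀ :=
      mul_eq_self_of_mem_op_span (one_sub_idem he) (i ⟨e, hmem_e⟩).2
    have heb₀ : e * b₀ = 0 := by
      rw [sub_mul, one_mul] at hb₀mem
      have := sub_eq_self.mp hb₀mem
      exact this
    have hea₀ : e * a₀ = a₀ :=
      mul_eq_self_of_mem_op_span he (p ⟨1 - e, hmem_1e⟩).2
    have hkey : i ⟨e, hmem_e⟩ = MulOpposite.op b₀ • (⟨1 - e, hmem_1e⟩ :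
        Submodule.span Rᵐᵒᵖ ({1 - e} : Set R)) := by
      apply Subtype.ext
      show b₀ = MulOpposite.op b₀ • (1 - e)
      rw [op_smul_eq_mul, hb₀mem]
    have hab : a₀ * b₀ = e := by
      have h1 : p (i ⟨e, hmem_e⟩) = ⟨e, hmem_e⟩ := by
        have := LinearMap.congr_fun h ⟨e, hmem_e⟩
        simpa using this
      rw [hkey, map_smul] at h1
      have h2 := congrArg (Subtype.val) h1
      simpa [op_smul_eq_mul, ← ha₀] using h2
    -- auxiliary right-associated identities
    have hab' : ∀ z, a₀ * (b₀ * z) = e * z := fun z => by rw [← mul_assoc, hab]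
    have heb' : ∀ z, e * (b₀ * z) = 0 := fun z => by rw [← mul_assoc, heb₀, zero_mul]
    have hea' : ∀ z, e * (a₀ * z) = a₀ * z := fun z => by rw [← mul_assoc, hea₀]
    have he' : ∀ z : R, e * (e * z) = e * z := fun z => by rw [← mul_assoc, he]
    refine ⟨a₀ - a₀ * e, b₀ * e, ?_, ?_, ?_, ?_, ?_, ?_⟩
    · simp [sub_mul, mul_sub, mul_assoc, hab', heb', he, hab, heb₀, hea₀]
    · simp [mul_sub, mul_assoc, hea', hea₀, he']
    · simp [mul_assoc, he]
    · simp [mul_assoc, heb', heb₀]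
    · simp [sub_mul, mul_assoc, he]
    · simp [sub_mul, mul_sub, mul_assoc, hab', heb', hea', he', he, hab, heb₀, hea₀]
  · rintro ⟨a, b, hab, hea, hbe, heb, hae, hbab⟩
    have hmemi : ∀ y : R, b * y ∈ Submodule.span Rᵐᵒᵖ ({1 - e} : Set R) := fun y => by
      refine Submodule.mem_span_singleton.mpr ⟨MulOpposite.op (b * y), ?_⟩
      rw [op_smul_eq_mul, sub_mul, one_mul, ← mul_assoc, heb, zero_mul, sub_zero]
    have hmemp : ∀ z : R, a * z ∈ Submodule.span Rᵐᵒᵖ ({e} : Set R) := fun z => by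
      refine Submodule.mem_span_singleton.mpr ⟨MulOpposite.op (a * z), ?_⟩
      rw [op_smul_eq_mul, ← mul_assoc, hea]
    refine ⟨⟨⟨fun y => ⟨b * y, hmemi y⟩, ?_⟩, ?_⟩, ⟨⟨fun z => ⟨a * z, hmemp z⟩, ?_⟩, ?_⟩, ?_⟩
    · intro y y'
      apply Subtype.ext
      simp [mul_add]
    · intro r y
      apply Subtype.ext
      show b * (r • (y : R)) = r • (b * (y : R))
      rw [← MulOpposite.op_unop r, op_smul_eq_mul, op_smul_eq_mul,
        mul_assoc]
    · intro z z'
      apply Subtype.ext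
      simp [mul_add]
    · intro r z
      apply Subtype.ext
      show a * (r • (z : R)) = r • (a * (z : R))
      rw [← MulOpposite.op_unop r, op_smul_eq_mul, op_smul_eq_mul,
        mul_assoc]
    · ext y
      show a * (b * (y : R)) = (y : R)
      rw [← mul_assoc, hab, mul_eq_self_of_mem_op_span he y.2]

theorem left_iff_repCond {e : R} (he : e * e = e) :
    IsoToSummand R (Submodule.span R ({e} : Set R))
      (Submodule.span R ({1 - e} : Set R)) ↔ RepCond e := by
  rw [isoToSummand_iff_retract]
  constructor
  · rintro ⟨i, p, h⟩
    have hmem_e : e ∈ Submodule.span R ({e} : Set R) := Submodule.mem_span_singleton_self e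
    have hmem_1e : (1 - e) ∈ Submodule.span R ({1 - e} : Set R) :=
      Submodule.mem_span_singleton_self _
    set a₀ : R := (i ⟨e, hmem_e⟩ : R) with ha₀
    set b₀ : R := (p ⟨1 - e, hmem_1e⟩ : R) with hb₀
    have ha₀mem : a₀ * (1 - e) = a₀ :=
      mul_eq_self_of_mem_span (one_sub_idem he) (i ⟨e, hmem_e⟩).2
    have hae₀ : a₀ * e = 0 := by
      rw [mul_sub, mul_one] at ha₀mem
      exact sub_eq_self.mp ha₀mem
    have hbe₀ : b₀ * e = b₀ :=
      mul_eq_self_of_mem_span he (p ⟨1 - e, hmem_1e⟩).2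
    have hkey : i ⟨e, hmem_e⟩ = a₀ • (⟨1 - e, hmem_1e⟩ :
        Submodule.span R ({1 - e} : Set R)) := by
      apply Subtype.ext
      show a₀ = a₀ • (1 - e)
      rw [smul_eq_mul, ha₀mem]
    have hab : a₀ * b₀ = e := by
      have h1 : p (i ⟨e, hmem_e⟩) = ⟨e, hmem_e⟩ := by
        have := LinearMap.congr_fun h ⟨e, hmem_e⟩
        simpa using this
      rw [hkey, map_smul] at h1
      have h2 := congrArg (Subtype.val) h1
      simpa [← hb₀] using h2
    have hab' : ∀ z, a₀ * (b₀ * z) = e * z := fun z => by rw [← mul_assoc, hab]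
    have hae' : ∀ z, a₀ * (e * z) = 0 := fun z => by rw [← mul_assoc, hae₀, zero_mul]
    have hbe' : ∀ z, b₀ * (e * z) = b₀ * z := fun z => by rw [← mul_assoc, hbe₀]
    have he' : ∀ z : R, e * (e * z) = e * z := fun z => by rw [← mul_assoc, he]
    refine ⟨e * a₀, b₀ - e * b₀, ?_, ?_, ?_, ?_, ?_, ?_⟩
    · simp [mul_sub, mul_assoc, hab', hae', he, hab]
    · simp [mul_assoc, he']
    · simp [sub_mul, mul_assoc, hbe₀, hbe', he]
    · simp [mul_sub, mul_assoc, he']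
    · simp [mul_assoc, hae', hae₀]
    · simp [sub_mul, mul_sub, mul_assoc, hab', hae', hbe', he', he, hab, hae₀, hbe₀]
  · rintro ⟨a, b, hab, hea, hbe, heb, hae, hbab⟩
    have hmemi : ∀ y : R, y * a ∈ Submodule.span R ({1 - e} : Set R) := fun y => by
      refine Submodule.mem_span_singleton.mpr ⟨y * a, ?_⟩
      rw [smul_eq_mul, mul_sub, mul_one, mul_assoc, hae, mul_zero, sub_zero]
    have hmemp : ∀ z : R, z * b ∈ Submodule.span R ({e} : Set R) := fun z => by
      refine Submodule.mem_span_singleton.mpr ⟨z * b, ?_⟩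
      rw [smul_eq_mul, mul_assoc, hbe]
    refine ⟨⟨⟨fun y => ⟨(y : R) * a, hmemi y⟩, ?_⟩, ?_⟩,
      ⟨⟨fun z => ⟨(z : R) * b, hmemp z⟩, ?_⟩, ?_⟩, ?_⟩
    · intro y y'
      apply Subtype.ext
      simp [add_mul]
    · intro r y
      apply Subtype.ext
      show (r • (y : R)) * a = r • ((y : R) * a)
      rw [smul_eq_mul, smul_eq_mul, mul_assoc]
    · intro z z'
      apply Subtype.ext
      simp [add_mul]
    · intro r z
      apply Subtype.ext
      show (r • (z : R)) * b = r • ((z : R) * b)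
      rw [smul_eq_mul, smul_eq_mul, mul_assoc]
    · ext y
      show (y : R) * a * b = (y : R)
      rw [mul_assoc, hab, mul_eq_self_of_mem_span he y.2]

end Idem

/-- Characterizations of right repeaters.  Right ideals of `R` are `Rᵐᵒᵖ`-submodules of `R`;
the right ideal `xR` is `Submodule.span Rᵐᵒᵖ {x}` and the left ideal `Rx` is
`Submodule.span R {x}`. -/
theorem rightRepeater_tfae {R : Type*} [Ring R] (x x' : R) (hx : x * x' * x = x) :
    List.TFAE
      [ IsoToSummand Rᵐᵒᵖ (Submodule.span Rᵐᵒᵖ {x})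
          (R ⧸ (Submodule.span Rᵐᵒᵖ {x} : Submodule Rᵐᵒᵖ R)),
        ∀ Y : Submodule Rᵐᵒᵖ R, IsCompl (Submodule.span Rᵐᵒᵖ {x}) Y →
          IsoToSummand Rᵐᵒᵖ (Submodule.span Rᵐᵒᵖ {x}) Y,
        IsoToSummand Rᵐᵒᵖ (Submodule.span Rᵐᵒᵖ {x * x'})
          (Submodule.span Rᵐᵒᵖ {1 - x * x'}),
        IsoToSummand R (Submodule.span R {x * x'}) (Submodule.span R {1 - x * x'}) ] := by
  have he : (x * x') * (x * x') = x * x' := by rw [← mul_assoc, hx]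
  have hspan : (Submodule.span Rᵐᵒᵖ {x} : Submodule Rᵐᵒᵖ R)
      = Submodule.span Rᵐᵒᵖ {x * x'} := by
    apply le_antisymm
    · rw [Submodule.span_le, Set.singleton_subset_iff]
      refine Submodule.mem_span_singleton.mpr ⟨MulOpposite.op x, ?_⟩
      rw [op_smul_eq_mul, hx]
    · rw [Submodule.span_le, Set.singleton_subset_iff]
      exact Submodule.mem_span_singleton.mpr ⟨MulOpposite.op x', rfl⟩
  have hc : IsCompl (Submodule.span Rᵐᵒᵖ {x} : Submodule Rᵐᵒᵖ R)
      (Submodule.span Rᵐᵒᵖ {1 - x * x'}) := by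
    rw [hspan]; exact isCompl_span_idem he
  tfae_have 1 → 2 := by
    intro h1 Y hY
    exact isoToSummand_congr (Submodule.quotientEquivOfIsCompl _ Y hY) h1
  tfae_have 2 → 3 := by
    intro h2
    have := h2 _ hc
    rwa [hspan] at this
  tfae_have 3 → 1 := by
    intro h3
    have h3' : IsoToSummand Rᵐᵒᵖ (Submodule.span Rᵐᵒᵖ {x})
        (Submodule.span Rᵐᵒᵖ {1 - x * x'}) := by rwa [hspan]
    exact isoToSummand_congr (Submodule.quotientEquivOfIsCompl _ _ hc).symm h3'
  tfae_have 3 ↔ 4 := (right_iff_repCond he).trans (left_iff_repCond he).symm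
  tfae_finish
end

section
/- Let R be a ring with a fixed inner inverse operation ' on its regular elements. If a ∈ R is regular and b ∈ R is such that (1−aa')baa' is regular, then x := (1−aa')ba is a right repeater: x is regular and xR is isomorphic to a direct summand of a complement of xR in R_R. -/
open MulOpposite in
/-- Left multiplication by a fixed element, as an `Rᵐᵒᵖ`-linear endomap of `R`
(i.e. an endomorphism of `R` as a right `R`-module). -/
private def lmulAux {R : Type*} [Ring R] (u : R) : R →ₗ[Rᵐᵒᵖ] R where
  toFun r := u * r
  map_add' := mul_add u
  map_smul' s r := by
    simp only [RingHom.id_apply]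
    rw [← op_unop s, op_smul_eq_mul, op_smul_eq_mul, mul_assoc]

open MulOpposite in
/-- Abstract form of the right-repeater argument. -/
private lemma aux_summand {R : Type*} [Ring R] (x xp u v g : R)
    (hfu : (x * xp) * u = 0)
    (hfg : (x * xp) * g = 0)
    (hgg : g * g = g)
    (hgux : g * (u * x) = u * x)
    (hv : ∃ w, x * w = v)
    (hvux : v * (u * x) = x)
    (huvg : u * (v * g) = g) :
    IsoToSummand Rᵐᵒᵖ (Submodule.span Rᵐᵒᵖ {x}) (Submodule.span Rᵐᵒᵖ {1 - x * xp}) := by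
  obtain ⟨w, hw⟩ := hv
  set N : Submodule Rᵐᵒᵖ R := Submodule.span Rᵐᵒᵖ {1 - x * xp} with hN
  have memN : ∀ r : R, (x * xp) * r = 0 → r ∈ N := by
    intro r hr
    rw [hN, Submodule.mem_span_singleton]
    exact ⟨op r, by rw [op_smul_eq_mul, sub_mul, one_mul, hr, sub_zero]⟩
  have hgN : ∀ r : R, g * r ∈ N := fun r =>
    memN _ (by rw [← mul_assoc, hfg, zero_mul])
  have huN : ∀ r : R, u * r ∈ N := fun r =>
    memN _ (by rw [← mul_assoc, hfu, zero_mul])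
  set π : N →ₗ[Rᵐᵒᵖ] N := (lmulAux g).restrict (fun v _ => hgN v) with hπ
  have πval : ∀ n : N, ((π n : N) : R) = g * (n : R) := fun n => rfl
  have hproj : LinearMap.IsProj (LinearMap.range π) π := by
    constructor
    · exact fun n => ⟨n, rfl⟩
    · rintro n ⟨m, rfl⟩
      apply Subtype.ext
      rw [πval, πval, ← mul_assoc, hgg]
  refine ⟨LinearMap.range π, LinearMap.ker π, hproj.isCompl, ⟨?_⟩⟩
  have memX : ∀ r : R, v * r ∈ Submodule.span Rᵐᵒᵖ {x} := by
    intro r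
    rw [Submodule.mem_span_singleton]
    exact ⟨op (w * r), by rw [op_smul_eq_mul, ← mul_assoc, hw]⟩
  have spanX : ∀ m : Submodule.span Rᵐᵒᵖ {x}, ∃ t : R, (m : R) = x * t := by
    intro m
    obtain ⟨t, ht⟩ := Submodule.mem_span_singleton.mp m.2
    exact ⟨t.unop, by rw [← ht]; rfl⟩
  have umem : ∀ m : Submodule.span Rᵐᵒᵖ {x},
      (⟨u * (m : R), huN _⟩ : N) ∈ LinearMap.range π := by
    intro m
    obtain ⟨t, ht⟩ := spanX m
    refine ⟨⟨u * (m : R), huN _⟩, Subtype.ext ?_⟩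
    rw [πval]
    show g * (u * (m : R)) = u * (m : R)
    rw [ht, ← mul_assoc, ← mul_assoc, mul_assoc g, hgux, mul_assoc]
  refine
    { toFun := fun m => ⟨⟨u * (m : R), huN _⟩, umem m⟩
      map_add' := by
        intro m₁ m₂
        apply Subtype.ext; apply Subtype.ext
        show u * ((m₁ : R) + (m₂ : R)) = u * (m₁ : R) + u * (m₂ : R)
        rw [mul_add]
      map_smul' := by
        intro s m
        apply Subtype.ext; apply Subtype.ext
        show u * ((s • m : Submodule.span Rᵐᵒᵖ {x}) : R) = s • (u * (m : R))
        rw [Submodule.coe_smul, ← op_unop s, op_smul_eq_mul, op_smul_eq_mul, mul_assoc]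
      invFun := fun p => ⟨v * ((p : N) : R), memX _⟩
      left_inv := by
        intro m
        apply Subtype.ext
        show v * (u * (m : R)) = (m : R)
        obtain ⟨t, ht⟩ := spanX m
        rw [ht, ← mul_assoc, ← mul_assoc, mul_assoc v, hvux]
      right_inv := by
        intro p
        apply Subtype.ext; apply Subtype.ext
        show u * (v * ((p : N) : R)) = ((p : N) : R)
        obtain ⟨n, hn⟩ := p.2
        have : ((p : N) : R) = g * (n : R) := by rw [← hn, πval]
        rw [this, ← mul_assoc, ← mul_assoc, mul_assoc u, huvg] }

/-- If `a` is regular with inner inverse `a'` and `(1-aa')baa'` is regular, then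
`x := (1-aa')ba` is a right repeater: `x` has an inner inverse `x⁺` and `xR` is
isomorphic to a direct summand of `(1-xx⁺)R` (a complement of `xR` in `R_R`). -/
theorem special_right_repeater {R : Type*} [Ring R] (a a' b : R)
    (ha : a * a' * a = a)
    (hreg : ∃ c : R, ((1 - a * a') * b * a * a') * c * ((1 - a * a') * b * a * a') =
      (1 - a * a') * b * a * a') :
    ∃ xp : R, ((1 - a * a') * b * a) * xp * ((1 - a * a') * b * a) = (1 - a * a') * b * a ∧
      IsoToSummand Rᵐᵒᵖ (Submodule.span Rᵐᵒᵖ {(1 - a * a') * b * a})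
        (Submodule.span Rᵐᵒᵖ {1 - ((1 - a * a') * b * a) * xp}) := by
  obtain ⟨c, hc⟩ := hreg
  -- basic identities
  have he : a * a' * (a * a') = a * a' := by rw [← mul_assoc, ha]
  have hTT : (1 - a * a') * (1 - a * a') = 1 - a * a' := by
    rw [sub_mul, one_mul, mul_sub, mul_one, he, sub_self, sub_zero]
  have hTe : (1 - a * a') * (a * a') = 0 := by
    rw [sub_mul, one_mul, he, sub_self]
  have hya : ((1 - a * a') * b * a * a') * a = (1 - a * a') * b * a := by
    calc ((1 - a * a') * b * a * a') * a = (1 - a * a') * b * (a * a' * a) := by noncomm_ring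
    _ = (1 - a * a') * b * a := by rw [ha]
  have hye : ((1 - a * a') * b * a * a') * (a * a') = (1 - a * a') * b * a * a' := by
    calc ((1 - a * a') * b * a * a') * (a * a')
        = (((1 - a * a') * b * a * a') * a) * a' := by noncomm_ring
    _ = ((1 - a * a') * b * a) * a' := by rw [hya]
  have hycy : ((1 - a * a') * b * a * a') * (c * ((1 - a * a') * b * a * a'))
      = (1 - a * a') * b * a * a' := by rw [← mul_assoc, hc]
  have hycx : ((1 - a * a') * b * a * a') * (c * ((1 - a * a') * b * a))
      = (1 - a * a') * b * a := by
    calc ((1 - a * a') * b * a * a') * (c * ((1 - a * a') * b * a))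
        = ((1 - a * a') * b * a * a') * (c * (((1 - a * a') * b * a * a') * a)) :=
          congrArg (fun z => ((1 - a * a') * b * a * a') * (c * z)) hya.symm
    _ = (((1 - a * a') * b * a * a') * c * ((1 - a * a') * b * a * a')) * a := by noncomm_ring
    _ = ((1 - a * a') * b * a * a') * a := by rw [hc]
    _ = (1 - a * a') * b * a := hya
  -- the inner inverse
  refine ⟨a' * c * (1 - a * a'), ?_, ?_⟩
  · calc (1 - a * a') * b * a * (a' * c * (1 - a * a')) * ((1 - a * a') * b * a)
        = ((1 - a * a') * b * a * a') * (c * (((1 - a * a') * (1 - a * a')) * b * a)) := by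
          noncomm_ring
    _ = ((1 - a * a') * b * a * a') * (c * ((1 - a * a') * b * a)) := by rw [hTT]
    _ = (1 - a * a') * b * a := hycx
  · apply aux_summand ((1 - a * a') * b * a) (a' * c * (1 - a * a'))
      (a * a' * c) ((1 - a * a') * b * a * a')
      (a * a' * c * ((1 - a * a') * b * a * a'))
    · -- f * u = 0
      calc (1 - a * a') * b * a * (a' * c * (1 - a * a')) * (a * a' * c)
          = ((1 - a * a') * b * a * a') * c * (((1 - a * a') * (a * a')) * c) := by noncomm_ring
      _ = 0 := by rw [hTe]; noncomm_ring
    · -- f * g = 0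
      calc (1 - a * a') * b * a * (a' * c * (1 - a * a'))
            * (a * a' * c * ((1 - a * a') * b * a * a'))
          = ((1 - a * a') * b * a * a') * c
            * (((1 - a * a') * (a * a')) * (c * ((1 - a * a') * b * a * a'))) := by noncomm_ring
      _ = 0 := by rw [hTe]; noncomm_ring
    · -- g * g = g
      calc (a * a' * c * ((1 - a * a') * b * a * a'))
            * (a * a' * c * ((1 - a * a') * b * a * a'))
          = a * a' * c * ((((1 - a * a') * b * a * a') * (a * a'))
              * (c * ((1 - a * a') * b * a * a'))) := by noncomm_ring
      _ = a * a' * c * (((1 - a * a') * b * a * a') * (c * ((1 - a * a') * b * a * a'))) := by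
          rw [hye]
      _ = a * a' * c * ((1 - a * a') * b * a * a') := by rw [hycy]
    · -- g * (u * x) = u * x
      calc (a * a' * c * ((1 - a * a') * b * a * a'))
            * (a * a' * c * ((1 - a * a') * b * a))
          = a * a' * c * ((((1 - a * a') * b * a * a') * (a * a'))
              * (c * ((1 - a * a') * b * a))) := by noncomm_ring
      _ = a * a' * c * (((1 - a * a') * b * a * a') * (c * ((1 - a * a') * b * a))) := by
          rw [hye]
      _ = a * a' * c * ((1 - a * a') * b * a) := by rw [hycx]
    · exact ⟨a', rfl⟩
    · -- v * (u * x) = x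
      calc ((1 - a * a') * b * a * a') * (a * a' * c * ((1 - a * a') * b * a))
          = (((1 - a * a') * b * a * a') * (a * a')) * (c * ((1 - a * a') * b * a)) := by
            noncomm_ring
      _ = ((1 - a * a') * b * a * a') * (c * ((1 - a * a') * b * a)) := by rw [hye]
      _ = (1 - a * a') * b * a := hycx
    · -- u * (v * g) = g
      calc a * a' * c * (((1 - a * a') * b * a * a')
            * (a * a' * c * ((1 - a * a') * b * a * a')))
          = a * a' * c * ((((1 - a * a') * b * a * a') * (a * a'))
              * (c * ((1 - a * a') * b * a * a'))) := by noncomm_ring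
      _ = a * a' * c * (((1 - a * a') * b * a * a')
              * (c * ((1 - a * a') * b * a * a'))) := by rw [hye]
      _ = a * a' * c * ((1 - a * a') * b * a * a') := by rw [hycy]
end

section
/- A ring R is core strongly separative if and only if every right repeater in R is unit-regular. -/
universe u

/-- A regular element `x` of `R` is a right repeater if the right ideal `xR` is isomorphic
to a direct summand of `R/xR` (right modules being `Rᵐᵒᵖ`-modules). -/
def RightRepeater {R : Type u} [Ring R] (x : R) : Prop :=
  (∃ x' : R, x * x' * x = x) ∧
  IsoToSummand Rᵐᵒᵖ (Submodule.span Rᵐᵒᵖ {x})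
    (R ⧸ (Submodule.span Rᵐᵒᵖ {x} : Submodule Rᵐᵒᵖ R))

/-- `R` is core strongly separative: for all finitely generated projective right
`R`-modules `A, B, C`, if `R ≅ A ⊕ C ⊕ C ≅ B ⊕ C` then `A ⊕ C ≅ B`. -/
def CoreStronglySeparative (R : Type u) [Ring R] : Prop :=
  ∀ (A B C : Type u) [AddCommGroup A] [AddCommGroup B] [AddCommGroup C]
    [Module Rᵐᵒᵖ A] [Module Rᵐᵒᵖ B] [Module Rᵐᵒᵖ C],
    Module.Finite Rᵐᵒᵖ A → Module.Projective Rᵐᵒᵖ A →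
    Module.Finite Rᵐᵒᵖ B → Module.Projective Rᵐᵒᵖ B →
    Module.Finite Rᵐᵒᵖ C → Module.Projective Rᵐᵒᵖ C →
    Nonempty (R ≃ₗ[Rᵐᵒᵖ] A × (C × C)) → Nonempty (R ≃ₗ[Rᵐᵒᵖ] B × C) →
    Nonempty ((A × C) ≃ₗ[Rᵐᵒᵖ] B)

namespace CSSAux

open LinearMap Submodule MulOpposite

variable {R : Type u} [Ring R]

/-- Left multiplication as an `Rᵐᵒᵖ`-linear endomorphism of `R`. -/
def lmul (x : R) : R →ₗ[Rᵐᵒᵖ] R where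
  toFun r := x * r
  map_add' := mul_add x
  map_smul' a r := by
    simp only [MulOpposite.smul_eq_mul_unop, RingHom.id_apply, mul_assoc]

@[simp] lemma lmul_apply (x r : R) : lmul x r = x * r := rfl

lemma endo_eq_lmul (g : R →ₗ[Rᵐᵒᵖ] R) (r : R) : g r = g 1 * r := by
  have := g.map_smul (op r) 1
  simpa [MulOpposite.smul_eq_mul_unop] using this

lemma span_singleton_eq_range (x : R) :
    (Submodule.span Rᵐᵒᵖ {x} : Submodule Rᵐᵒᵖ R) = LinearMap.range (lmul x) := by
  ext y
  simp only [Submodule.mem_span_singleton, LinearMap.mem_range, lmul_apply]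
  constructor
  · rintro ⟨a, rfl⟩; exact ⟨a.unop, by simp [MulOpposite.smul_eq_mul_unop]⟩
  · rintro ⟨a, rfl⟩; exact ⟨op a, by simp [MulOpposite.smul_eq_mul_unop]⟩

/-- Equiv between two submodules of `R` given by left multiplications. -/
def mulEquiv (c c' : R) (p q : Submodule Rᵐᵒᵖ R)
    (hc : ∀ y ∈ p, c * y ∈ q) (hc' : ∀ y ∈ q, c' * y ∈ p)
    (h1 : ∀ y ∈ p, c' * (c * y) = y) (h2 : ∀ y ∈ q, c * (c' * y) = y) :
    p ≃ₗ[Rᵐᵒᵖ] q where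
  toFun y := ⟨c * y, hc y y.2⟩
  map_add' y z := by ext; simp [mul_add]
  map_smul' a y := by ext; simp [MulOpposite.smul_eq_mul_unop, mul_assoc]
  invFun y := ⟨c' * y, hc' y y.2⟩
  left_inv y := Subtype.ext (h1 y y.2)
  right_inv y := Subtype.ext (h2 y y.2)

@[simp] lemma mulEquiv_apply (c c' : R) (p q : Submodule Rᵐᵒᵖ R) (hc hc' h1 h2) (y : p) :
    (mulEquiv c c' p q hc hc' h1 h2 y : R) = c * y := rfl

lemma isCompl_ranges (e : R) (he : e * e = e) :
    IsCompl (LinearMap.range (lmul e)) (LinearMap.range (lmul (1 - e))) := by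
  constructor
  · rw [disjoint_iff]
    ext y
    simp only [Submodule.mem_inf, LinearMap.mem_range, lmul_apply, Submodule.mem_bot]
    constructor
    · rintro ⟨⟨a, ha⟩, ⟨b, hb⟩⟩
      have h1 : e * y = y := by rw [← ha, ← mul_assoc, he]
      have h2 : e * y = 0 := by
        rw [← hb, ← mul_assoc, mul_sub, mul_one, he, sub_self, zero_mul]
      rw [← h1, h2]
    · rintro rfl; exact ⟨⟨0, by simp⟩, ⟨0, by simp⟩⟩
  · rw [codisjoint_iff, eq_top_iff]
    intro y _
    rw [Submodule.mem_sup]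
    have h : e + (1 - e) = 1 := by abel
    exact ⟨e * y, ⟨y, rfl⟩, (1 - e) * y, ⟨y, rfl⟩, by rw [← add_mul, h, one_mul]⟩

end CSSAux
namespace CSSAux
variable {R : Type u} [Ring R]
open LinearMap Submodule MulOpposite

lemma ker_lmul (x x' : R) (hx : x * x' * x = x) :
    LinearMap.ker (lmul x) = LinearMap.range (lmul (1 - x' * x)) := by
  ext y
  simp only [LinearMap.mem_ker, LinearMap.mem_range, lmul_apply]
  constructor
  · intro h
    exact ⟨y, by rw [sub_mul, one_mul, mul_assoc, h, mul_zero, sub_zero]⟩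
  · rintro ⟨a, rfl⟩
    rw [← mul_assoc, mul_sub, mul_one, ← mul_assoc, hx, sub_self, zero_mul]

lemma range_lmul_f (x x' : R) (hx : x * x' * x = x) :
    LinearMap.range (lmul x) = LinearMap.range (lmul (x * x')) := by
  ext y
  simp only [LinearMap.mem_range, lmul_apply]
  constructor
  · rintro ⟨a, rfl⟩; exact ⟨x * a, by rw [← mul_assoc, hx]⟩
  · rintro ⟨a, rfl⟩; exact ⟨x' * a, by rw [← mul_assoc]⟩

/-- The cokernel of left multiplication by a regular element. -/
noncomputable def cokerEquiv (x x' : R) (hx : x * x' * x = x) :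
    (R ⧸ LinearMap.range (lmul x)) ≃ₗ[Rᵐᵒᵖ] LinearMap.range (lmul (1 - x * x')) :=
  (Submodule.quotEquivOfEq _ _ (range_lmul_f x x' hx)).trans
    (Submodule.quotientEquivOfIsCompl _ _
      (isCompl_ranges (x * x') (by rw [← mul_assoc, hx])))

/-- An `Rᵐᵒᵖ`-linear automorphism of `R` gives a unit. -/
def unitOfEquiv (g : R ≃ₗ[Rᵐᵒᵖ] R) : Rˣ where
  val := g 1
  inv := g.symm 1
  val_inv := by
    have h1 : g (g.symm 1) = g 1 * g.symm 1 := endo_eq_lmul (g : R →ₗ[Rᵐᵒᵖ] R) (g.symm 1)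
    rw [← h1, g.apply_symm_apply]
  inv_val := by
    have h1 : g.symm (g 1) = g.symm 1 * g 1 := endo_eq_lmul (g.symm : R →ₗ[Rᵐᵒᵖ] R) (g 1)
    rw [← h1, g.symm_apply_apply]

lemma unitOfEquiv_mul (g : R ≃ₗ[Rᵐᵒᵖ] R) (r : R) :
    (unitOfEquiv g : R) * r = g r := (endo_eq_lmul (g : R →ₗ[Rᵐᵒᵖ] R) r).symm

end CSSAux
namespace CSSAux
variable {R : Type u} [Ring R]
open LinearMap Submodule MulOpposite

/-- range of `lmul e` ≃ range of `lmul x` when `x = x x' x`, `e = x' x`. -/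
noncomputable def rangeIdemEquiv (x x' : R) (hx : x * x' * x = x) :
    (LinearMap.range (lmul (x' * x)) : Submodule Rᵐᵒᵖ R) ≃ₗ[Rᵐᵒᵖ] LinearMap.range (lmul x) := by
  have key : ∀ a : R, x * (x' * x * a) = x * a := fun a => by
    rw [← mul_assoc, ← mul_assoc, hx]
  refine mulEquiv x x' _ _ ?_ ?_ ?_ ?_
  · rintro y ⟨a, rfl⟩
    exact ⟨x' * x * a, rfl⟩
  · rintro y ⟨a, rfl⟩
    exact ⟨a, by rw [lmul_apply, lmul_apply, mul_assoc]⟩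
  · rintro y ⟨a, rfl⟩
    rw [lmul_apply, key, ← mul_assoc]
  · rintro y ⟨a, rfl⟩
    rw [lmul_apply, ← mul_assoc x' x a, key]

lemma exists_unit_of_iso (x x' : R) (hx : x * x' * x = x)
    (ψ : (LinearMap.range (lmul (1 - x' * x)) : Submodule Rᵐᵒᵖ R) ≃ₗ[Rᵐᵒᵖ]
      LinearMap.range (lmul (1 - x * x'))) :
    ∃ u : Rˣ, x * (u : R) * x = x := by
  have he : (x' * x) * (x' * x) = x' * x := by
    rw [mul_assoc x' x (x' * x), ← mul_assoc x x' x, hx]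
  have hf : (x * x') * (x * x') = x * x' := by rw [← mul_assoc, hx]
  have hcompl_e := isCompl_ranges (x' * x) he
  have hcompl_f := isCompl_ranges (x * x') hf
  -- range (lmul x) = range (lmul (x * x'))
  have hrx : LinearMap.range (lmul x) = LinearMap.range (lmul (x * x')) :=
    range_lmul_f x x' hx
  let φ : (LinearMap.range (lmul (x' * x)) : Submodule Rᵐᵒᵖ R) ≃ₗ[Rᵐᵒᵖ]
      LinearMap.range (lmul (x * x')) :=
    (rangeIdemEquiv x x' hx).trans (LinearEquiv.ofEq _ _ hrx.symm).symm
  let g : R ≃ₗ[Rᵐᵒᵖ] R :=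
    ((Submodule.prodEquivOfIsCompl _ _ hcompl_e).symm.trans (φ.prodCongr ψ)).trans
      (Submodule.prodEquivOfIsCompl _ _ hcompl_f)
  set u := unitOfEquiv g with hu
  have key : ∀ r : R, (u : R) * ((x' * x) * r) = x * ((x' * x) * r) := by
    intro r
    rw [unitOfEquiv_mul]
    have hmem : (x' * x) * r ∈ LinearMap.range (lmul (x' * x)) := ⟨r, rfl⟩
    have hdecomp : (Submodule.prodEquivOfIsCompl _ _ hcompl_e).symm ((x' * x) * r) =
        (⟨(x' * x) * r, hmem⟩, 0) := by
      rw [LinearEquiv.symm_apply_eq, Submodule.coe_prodEquivOfIsCompl']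
      simp
    show ((Submodule.prodEquivOfIsCompl _ _ hcompl_e).symm.trans (φ.prodCongr ψ)).trans
      (Submodule.prodEquivOfIsCompl _ _ hcompl_f) ((x' * x) * r) = _
    rw [LinearEquiv.trans_apply, LinearEquiv.trans_apply, hdecomp]
    simp only [LinearEquiv.prodCongr_apply, map_zero, Submodule.coe_prodEquivOfIsCompl']
    have : (φ ⟨(x' * x) * r, hmem⟩ : R) = x * ((x' * x) * r) := rfl
    rw [this]
    simp
  have hux : (u : R) * (x' * x) = x := by
    have := key 1
    rw [mul_one] at this
    rw [this, ← mul_assoc, hx]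
  refine ⟨u⁻¹, ?_⟩
  have : x * (↑u⁻¹ : R) * x = x * (↑u⁻¹ : R) * ((u : R) * (x' * x)) := by rw [hux]
  rw [this, ← mul_assoc, mul_assoc x (↑u⁻¹ : R) (u : R), Units.inv_mul, mul_one,
    ← mul_assoc, hx]

lemma iso_of_unit (x : R) (u : Rˣ) (h : x * (u : R) * x = x) :
    Nonempty ((R ⧸ LinearMap.range (lmul x)) ≃ₗ[Rᵐᵒᵖ] LinearMap.ker (lmul x)) := by
  have hswap : (u : R) * (1 - x * u) = (1 - (u : R) * x) * u := by noncomm_ring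
  have hswap' : (↑u⁻¹ : R) * (1 - (u : R) * x) = (1 - x * (u : R)) * ↑u⁻¹ := by
    have h1 : (↑u⁻¹ : R) * ((u : R) * x) = x := by
      rw [← mul_assoc, Units.inv_mul, one_mul]
    rw [mul_sub, sub_mul, mul_one, one_mul, h1]
    congr 1
    rw [mul_assoc, Units.mul_inv, mul_one]
  let θ : (LinearMap.range (lmul (1 - x * (u : R))) : Submodule Rᵐᵒᵖ R) ≃ₗ[Rᵐᵒᵖ]
      LinearMap.range (lmul (1 - (u : R) * x)) := by
    refine mulEquiv (u : R) (↑u⁻¹ : R) _ _ ?_ ?_ ?_ ?_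
    · rintro y ⟨a, rfl⟩
      exact ⟨(u : R) * a, by rw [lmul_apply, lmul_apply, ← mul_assoc, ← hswap, mul_assoc]⟩
    · rintro y ⟨a, rfl⟩
      exact ⟨(↑u⁻¹ : R) * a, by rw [lmul_apply, lmul_apply, ← mul_assoc, ← hswap', mul_assoc]⟩
    · rintro y ⟨a, rfl⟩
      rw [← mul_assoc, Units.inv_mul, one_mul]
    · rintro y ⟨a, rfl⟩
      rw [← mul_assoc, Units.mul_inv, one_mul]
  exact ⟨((cokerEquiv x u h).trans θ).trans
    (LinearEquiv.ofEq _ _ (ker_lmul x u h).symm)⟩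

end CSSAux
namespace CSSAux
variable {R : Type u} [Ring R]
open LinearMap Submodule MulOpposite

/-- `R` as a right module over itself is isomorphic to `Rᵐᵒᵖ` as `Rᵐᵒᵖ`-module. -/
def opEquiv : R ≃ₗ[Rᵐᵒᵖ] Rᵐᵒᵖ where
  toFun := op
  invFun := unop
  map_add' _ _ := rfl
  map_smul' a r := by
    simp [MulOpposite.smul_eq_mul_unop, smul_eq_mul]
  left_inv _ := rfl
  right_inv _ := rfl

lemma finProj_of_retract {M N : Type u} [AddCommGroup M] [AddCommGroup N]
    [Module Rᵐᵒᵖ M] [Module Rᵐᵒᵖ N]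
    (hfin : Module.Finite Rᵐᵒᵖ N) (hproj : Module.Projective Rᵐᵒᵖ N)
    (i : M →ₗ[Rᵐᵒᵖ] N) (s : N →ₗ[Rᵐᵒᵖ] M) (h : s.comp i = LinearMap.id) :
    Module.Finite Rᵐᵒᵖ M ∧ Module.Projective Rᵐᵒᵖ M := by
  constructor
  · exact Module.Finite.of_surjective s (fun m => ⟨i m, by
      have := LinearMap.congr_fun h m; simpa using this⟩)
  · exact Module.Projective.of_split i s h

lemma finProj_of_equiv {M N : Type u} [AddCommGroup M] [AddCommGroup N]
    [Module Rᵐᵒᵖ M] [Module Rᵐᵒᵖ N]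
    (hfin : Module.Finite Rᵐᵒᵖ N) (hproj : Module.Projective Rᵐᵒᵖ N)
    (e : M ≃ₗ[Rᵐᵒᵖ] N) : Module.Finite Rᵐᵒᵖ M ∧ Module.Projective Rᵐᵒᵖ M :=
  finProj_of_retract hfin hproj e.toLinearMap e.symm.toLinearMap (by ext m; simp)

lemma finProj_R : Module.Finite Rᵐᵒᵖ R ∧ Module.Projective Rᵐᵒᵖ R :=
  finProj_of_equiv inferInstance inferInstance (opEquiv (R := R))

lemma finProj_of_isCompl {M : Type u} [AddCommGroup M] [Module Rᵐᵒᵖ M]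
    (hfin : Module.Finite Rᵐᵒᵖ M) (hproj : Module.Projective Rᵐᵒᵖ M)
    (p q : Submodule Rᵐᵒᵖ M) (h : IsCompl p q) :
    Module.Finite Rᵐᵒᵖ p ∧ Module.Projective Rᵐᵒᵖ p :=
  finProj_of_retract hfin hproj p.subtype (p.linearProjOfIsCompl q h)
    (by ext y; exact congrArg Subtype.val (Submodule.linearProjOfIsCompl_apply_left h y))

/-- rotate a triple product. -/
def rotEquiv (S : Type*) [Semiring S] (M N P : Type*) [AddCommMonoid M] [AddCommMonoid N]
    [AddCommMonoid P] [Module S M] [Module S N] [Module S P] :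
    (M × (N × P)) ≃ₗ[S] P × (M × N) where
  toFun z := (z.2.2, (z.1, z.2.1))
  invFun z := (z.2.1, (z.2.2, z.1))
  map_add' _ _ := rfl
  map_smul' _ _ := rfl
  left_inv _ := rfl
  right_inv _ := rfl

lemma isCompl_map_equiv {M N : Type u} [AddCommGroup M] [AddCommGroup N]
    [Module Rᵐᵒᵖ M] [Module Rᵐᵒᵖ N] (e : M ≃ₗ[Rᵐᵒᵖ] N) {p q : Submodule Rᵐᵒᵖ M}
    (h : IsCompl p q) :
    IsCompl (p.map (e : M →ₗ[Rᵐᵒᵖ] N)) (q.map (e : M →ₗ[Rᵐᵒᵖ] N)) :=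
  (Submodule.orderIsoMapComap e).isCompl h

end CSSAux
namespace CSSAux
variable {R : Type u} [Ring R]
open LinearMap Submodule MulOpposite

lemma forward_dir (hCSS : CoreStronglySeparative R) (x : R) (hx : RightRepeater x) :
    ∃ u : Rˣ, x * (u : R) * x = x := by
  obtain ⟨⟨x', hx'⟩, P, Q, hPQ, ⟨ν⟩⟩ := hx
  have he : (x' * x) * (x' * x) = x' * x := by
    rw [mul_assoc x' x (x' * x), ← mul_assoc x x' x, hx']
  have hf : (x * x') * (x * x') = x * x' := by rw [← mul_assoc, hx']
  have hcompl_e := isCompl_ranges (x' * x) he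
  have hcompl_f := isCompl_ranges (x * x') hf
  set S : Submodule Rᵐᵒᵖ R := LinearMap.range (lmul x) with hS
  set K : Submodule Rᵐᵒᵖ R := LinearMap.range (lmul (1 - x' * x)) with hK
  have hspan : (Submodule.span Rᵐᵒᵖ {x} : Submodule Rᵐᵒᵖ R) = S := span_singleton_eq_range x
  -- range(1 - x x') ≃ R ⧸ span {x}
  let Ecok : (LinearMap.range (lmul (1 - x * x')) : Submodule Rᵐᵒᵖ R) ≃ₗ[Rᵐᵒᵖ]
      (R ⧸ (Submodule.span Rᵐᵒᵖ {x} : Submodule Rᵐᵒᵖ R)) :=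
    (cokerEquiv x x' hx').symm.trans (Submodule.quotEquivOfEq S _ hspan.symm)
  let φe : (LinearMap.range (lmul (x' * x)) : Submodule Rᵐᵒᵖ R) ≃ₗ[Rᵐᵒᵖ] S :=
    rangeIdemEquiv x x' hx'
  let νS : S ≃ₗ[Rᵐᵒᵖ] P := (LinearEquiv.ofEq S _ hspan.symm).trans ν
  -- R ≅ Q × (S × S)
  let eq1 : R ≃ₗ[Rᵐᵒᵖ] (↥Q × (↥S × ↥S)) :=
    ((Submodule.prodEquivOfIsCompl _ _ hcompl_f).symm.trans
      (((LinearEquiv.ofEq _ _ ((range_lmul_f x x' hx').symm)).prodCongr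
        (Ecok.trans (Submodule.prodEquivOfIsCompl P Q hPQ).symm)).trans
        ((LinearEquiv.refl Rᵐᵒᵖ S).prodCongr ((νS.symm).prodCongr (LinearEquiv.refl Rᵐᵒᵖ Q))))).trans
      (rotEquiv Rᵐᵒᵖ ↥S ↥S ↥Q)
  -- R ≅ K × S
  let eq2 : R ≃ₗ[Rᵐᵒᵖ] (↥K × ↥S) :=
    ((Submodule.prodEquivOfIsCompl _ _ hcompl_e).symm.trans
      (φe.prodCongr (LinearEquiv.refl Rᵐᵒᵖ K))).trans (LinearEquiv.prodComm Rᵐᵒᵖ ↥S ↥K)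
  obtain ⟨finR, projR⟩ := finProj_R (R := R)
  have hcompl_S : IsCompl S (LinearMap.range (lmul (1 - x * x'))) := by
    rw [hS, range_lmul_f x x' hx']; exact hcompl_f
  obtain ⟨finS, projS⟩ := finProj_of_isCompl finR projR S _ hcompl_S
  obtain ⟨finK, projK⟩ := finProj_of_isCompl finR projR K _ hcompl_e.symm
  obtain ⟨finF, projF⟩ := finProj_of_isCompl finR projR
    (LinearMap.range (lmul (1 - x * x'))) _ hcompl_f.symm
  obtain ⟨finC0, projC0⟩ := finProj_of_equiv finF projF Ecok.symm
  obtain ⟨finQ, projQ⟩ := finProj_of_isCompl finC0 projC0 Q P hPQ.symm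
  obtain ⟨θ⟩ := hCSS ↥Q ↥K ↥S finQ projQ finK projK finS projS ⟨eq1⟩ ⟨eq2⟩
  refine exists_unit_of_iso x x' hx' ?_
  exact θ.symm.trans ((LinearEquiv.prodComm Rᵐᵒᵖ ↥Q ↥S).trans
    (((νS.prodCongr (LinearEquiv.refl Rᵐᵒᵖ Q)).trans
      (Submodule.prodEquivOfIsCompl P Q hPQ)).trans Ecok.symm))

end CSSAux
namespace CSSAux
variable {R : Type u} [Ring R]
open LinearMap Submodule MulOpposite

lemma backward_dir (hUR : ∀ x : R, RightRepeater x → ∃ u : Rˣ, x * (u : R) * x = x) :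
    CoreStronglySeparative R := by
  intro A B C _ _ _ _ _ _ finA projA finB projB finC projC hAB hBC
  obtain ⟨e1⟩ := hAB
  obtain ⟨e2⟩ := hBC
  -- the structural maps
  let h : (B × C) →ₗ[Rᵐᵒᵖ] (A × (C × C)) :=
    LinearMap.prod 0 ((LinearMap.snd Rᵐᵒᵖ B C).prod 0)
  let h' : (A × (C × C)) →ₗ[Rᵐᵒᵖ] (B × C) :=
    LinearMap.prod 0 ((LinearMap.fst Rᵐᵒᵖ C C).comp (LinearMap.snd Rᵐᵒᵖ A (C × C)))
  let j : C →ₗ[Rᵐᵒᵖ] (A × (C × C)) :=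
    LinearMap.prod 0 ((LinearMap.id : C →ₗ[Rᵐᵒᵖ] C).prod 0)
  have h_apply : ∀ z : B × C, h z = (0, (z.2, 0)) := fun z => rfl
  have h'_apply : ∀ z : A × (C × C), h' z = (0, z.2.1) := fun z => rfl
  have j_apply : ∀ c : C, j c = (0, (c, 0)) := fun c => rfl
  let g : R →ₗ[Rᵐᵒᵖ] R := e1.symm.toLinearMap ∘ₗ h ∘ₗ e2.toLinearMap
  let g' : R →ₗ[Rᵐᵒᵖ] R := e2.symm.toLinearMap ∘ₗ h' ∘ₗ e1.toLinearMap
  have g_apply : ∀ r : R, g r = e1.symm (h (e2 r)) := fun r => rfl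
  have g'_apply : ∀ r : R, g' r = e2.symm (h' (e1 r)) := fun r => rfl
  set x : R := g 1 with hxdef
  set x' : R := g' 1 with hx'def
  have gx : ∀ r : R, g r = x * r := fun r => endo_eq_lmul g r
  have g'x : ∀ r : R, g' r = x' * r := fun r => endo_eq_lmul g' r
  have hlg : lmul x = g := LinearMap.ext fun r => by rw [lmul_apply, gx]
  -- regularity
  have hhh : ∀ z : B × C, h (h' (h z)) = h z := fun z => rfl
  have hpt : ∀ r : R, g (g' (g r)) = g r := by
    intro r
    rw [g_apply (g' (g r)), g'_apply (g r), g_apply r,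
      LinearEquiv.apply_symm_apply, LinearEquiv.apply_symm_apply, hhh]
  have hreg : x * x' * x = x := by
    have h1 := hpt 1
    rw [gx (g' (g 1)), g'x (g 1)] at h1
    rw [mul_assoc]
    exact h1
  -- the range of g
  have hrg : LinearMap.range g =
      (LinearMap.range h).map (e1.symm : (A × (C × C)) →ₗ[Rᵐᵒᵖ] R) := by
    show LinearMap.range (e1.symm.toLinearMap ∘ₗ (h ∘ₗ e2.toLinearMap)) = _
    rw [LinearMap.range_comp, LinearMap.range_comp_of_range_eq_top h e2.range]
  have hspanrg : (Submodule.span Rᵐᵒᵖ {x} : Submodule Rᵐᵒᵖ R) = LinearMap.range g := by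
    rw [span_singleton_eq_range, hlg]
  -- quotient equivalence Φ : R ⧸ xR ≃ A × C
  have hmap : (Submodule.span Rᵐᵒᵖ {x} : Submodule Rᵐᵒᵖ R).map
      (e1 : R →ₗ[Rᵐᵒᵖ] (A × (C × C))) = LinearMap.range h := by
    rw [hspanrg, hrg, ← Submodule.map_comp]
    have hid : (e1 : R →ₗ[Rᵐᵒᵖ] (A × (C × C))).comp
        (e1.symm : (A × (C × C)) →ₗ[Rᵐᵒᵖ] R) = LinearMap.id := by
      ext z <;> simp
    rw [hid, Submodule.map_id]
  let π : (A × (C × C)) →ₗ[Rᵐᵒᵖ] (A × C) :=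
    LinearMap.prod (LinearMap.fst Rᵐᵒᵖ A (C × C))
      ((LinearMap.snd Rᵐᵒᵖ C C).comp (LinearMap.snd Rᵐᵒᵖ A (C × C)))
  have π_apply : ∀ z : A × (C × C), π z = (z.1, z.2.2) := fun z => rfl
  have hkerπ : LinearMap.range h = LinearMap.ker π := by
    ext z
    simp only [LinearMap.mem_ker, LinearMap.mem_range, π_apply, h_apply, Prod.ext_iff,
      Prod.fst_zero, Prod.snd_zero]
    constructor
    · rintro ⟨w, hw1, hw2, hw3⟩
      exact ⟨hw1.symm, hw3.symm⟩
    · rintro ⟨hz1, hz2⟩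
      exact ⟨(0, z.2.1), hz1.symm, rfl, hz2.symm⟩
  have πsurj : Function.Surjective π := fun z => ⟨(z.1, (0, z.2)), rfl⟩
  let Φ : (R ⧸ (Submodule.span Rᵐᵒᵖ {x} : Submodule Rᵐᵒᵖ R)) ≃ₗ[Rᵐᵒᵖ] (A × C) :=
    (Submodule.Quotient.equiv _ _ e1 hmap).trans
      ((Submodule.quotEquivOfEq _ _ hkerπ).trans (π.quotKerEquivOfSurjective πsurj))
  -- the summand data
  let P : Submodule Rᵐᵒᵖ (R ⧸ (Submodule.span Rᵐᵒᵖ {x} : Submodule Rᵐᵒᵖ R)) :=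
    (LinearMap.range (LinearMap.inr Rᵐᵒᵖ A C)).map
      (Φ.symm : (A × C) →ₗ[Rᵐᵒᵖ] _)
  let Qc : Submodule Rᵐᵒᵖ (R ⧸ (Submodule.span Rᵐᵒᵖ {x} : Submodule Rᵐᵒᵖ R)) :=
    (LinearMap.range (LinearMap.inl Rᵐᵒᵖ A C)).map
      (Φ.symm : (A × C) →ₗ[Rᵐᵒᵖ] _)
  have hcompl : IsCompl P Qc :=
    isCompl_map_equiv Φ.symm LinearMap.isCompl_range_inl_inr.symm
  -- span {x} ≃ P
  have hrange_hj : LinearMap.range h = LinearMap.range j := by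
    ext z
    simp only [LinearMap.mem_range, h_apply, j_apply]
    constructor
    · rintro ⟨w, hw⟩; exact ⟨w.2, hw⟩
    · rintro ⟨c, hc⟩; exact ⟨(0, c), hc⟩
  have hj_inj : Function.Injective j := by
    intro c c' hcc
    have := congrArg (fun z : A × (C × C) => z.2.1) hcc
    simpa [j_apply] using this
  let ρ : (Submodule.span Rᵐᵒᵖ {x} : Submodule Rᵐᵒᵖ R) ≃ₗ[Rᵐᵒᵖ] P :=
    (LinearEquiv.ofEq _ _ hspanrg).trans
      ((LinearEquiv.ofEq _ _ hrg).trans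
        (((e1.symm.submoduleMap (LinearMap.range h)).symm).trans
          ((LinearEquiv.ofEq _ _ hrange_hj).trans
            (((LinearEquiv.ofInjective j hj_inj).symm).trans
              ((LinearEquiv.ofInjective (LinearMap.inr Rᵐᵒᵖ A C) LinearMap.inr_injective).trans
                (Φ.symm.submoduleMap (LinearMap.range (LinearMap.inr Rᵐᵒᵖ A C))))))))
  have hrep : RightRepeater x := ⟨⟨x', hreg⟩, P, Qc, hcompl, ⟨ρ⟩⟩
  obtain ⟨u, hu⟩ := hUR x hrep
  obtain ⟨κ⟩ := iso_of_unit x u hu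
  -- kernel computations
  have hkg : LinearMap.ker (lmul x) = LinearMap.ker g := by rw [hlg]
  have hkg2 : LinearMap.ker g = (LinearMap.ker h).comap (e2 : R →ₗ[Rᵐᵒᵖ] (B × C)) := by
    ext r
    simp only [LinearMap.mem_ker, Submodule.mem_comap, g_apply]
    exact LinearEquiv.map_eq_zero_iff e1.symm
  have hkerh : LinearMap.ker h = LinearMap.range (LinearMap.inl Rᵐᵒᵖ B C) := by
    ext z
    rw [LinearMap.mem_ker, LinearMap.mem_range]
    constructor
    · intro hz
      have hz2 : z.2 = 0 := by
        have := congrArg (fun w : A × (C × C) => w.2.1) hz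
        simpa [h_apply] using this
      exact ⟨z.1, by rw [Prod.ext_iff]; exact ⟨rfl, hz2.symm⟩⟩
    · rintro ⟨b, rfl⟩
      rw [h_apply]
      simp
  have hcomap : (LinearMap.ker h).comap (e2 : R →ₗ[Rᵐᵒᵖ] (B × C)) =
      (LinearMap.ker h).map (e2.symm : (B × C) →ₗ[Rᵐᵒᵖ] R) :=
    Submodule.comap_equiv_eq_map_symm e2 (LinearMap.ker h)
  -- final chain : A × C ≃ B
  refine ⟨Φ.symm.trans ((Submodule.quotEquivOfEq _ _ (span_singleton_eq_range x)).trans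
    (κ.trans ((LinearEquiv.ofEq _ _ ((hkg.trans hkg2).trans hcomap)).trans
      (((e2.symm.submoduleMap (LinearMap.ker h)).symm).trans
        ((LinearEquiv.ofEq _ _ hkerh).trans
          (LinearEquiv.ofInjective (LinearMap.inl Rᵐᵒᵖ B C) LinearMap.inl_injective).symm)))))⟩

end CSSAux


theorem coreStronglySeparative_iff_rightRepeaters_unitRegular
    (R : Type u) [Ring R] :
    CoreStronglySeparative R ↔
      ∀ x : R, RightRepeater x → ∃ u : Rˣ, x * (u : R) * x = x := by
  exact ⟨fun hCSS x hx => CSSAux.forward_dir hCSS x hx, fun hUR => CSSAux.backward_dir hUR⟩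
end

section
/- Let R be a ring, e ∈ R an idempotent, and x ∈ eRe. Then x is unit-regular in the corner ring eRe if and only if x + (1−e) is unit-regular in R. -/
theorem unitRegular_corner_iff {R : Type*} [Ring R] (e x : R)
    (he : IsIdempotentElem e) (hx : e * x * e = x) :
    (∃ u v : R, e * u * e = u ∧ e * v * e = v ∧ u * v = e ∧ v * u = e ∧
      x * u * x = x) ↔
    (∃ w : Rˣ, (x + (1 - e)) * (w : R) * (x + (1 - e)) = x + (1 - e)) := by
  have hee : e * e = e := he
  have hex : e * x = x := by
    calc e * x = e * (e * x * e) := by rw [hx]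
      _ = (e * e) * x * e := by noncomm_ring
      _ = x := by rw [hee, hx]
  have hxe : x * e = x := by
    calc x * e = (e * x * e) * e := by rw [hx]
      _ = e * x * (e * e) := by noncomm_ring
      _ = x := by rw [hee, hx]
  constructor
  · rintro ⟨u, v, hu, hv, huv, hvu, hxu⟩
    have heu : e * u = u := by
      calc e * u = e * (e * u * e) := by rw [hu]
        _ = (e * e) * u * e := by noncomm_ring
        _ = u := by rw [hee, hu]
    have hue : u * e = u := by
      calc u * e = (e * u * e) * e := by rw [hu]
        _ = e * u * (e * e) := by noncomm_ring
        _ = u := by rw [hee, hu]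
    have hev : e * v = v := by
      calc e * v = e * (e * v * e) := by rw [hv]
        _ = (e * e) * v * e := by noncomm_ring
        _ = v := by rw [hee, hv]
    have hve : v * e = v := by
      calc v * e = (e * v * e) * e := by rw [hv]
        _ = e * v * (e * e) := by noncomm_ring
        _ = v := by rw [hee, hv]
    refine ⟨⟨u + (1 - e), v + (1 - e), ?_, ?_⟩, ?_⟩
    · calc (u + (1 - e)) * (v + (1 - e))
          = u * v + (u - u * e) + (v - e * v) + (1 - e - e + e * e) := by noncomm_ring
        _ = 1 := by rw [huv, hue, hev, hee]; abel
    · calc (v + (1 - e)) * (u + (1 - e))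
          = v * u + (v - v * e) + (u - e * u) + (1 - e - e + e * e) := by noncomm_ring
        _ = 1 := by rw [hvu, hve, heu, hee]; abel
    · show (x + (1 - e)) * (u + (1 - e)) * (x + (1 - e)) = x + (1 - e)
      have h1 : (x + (1 - e)) * (u + (1 - e)) = x * u + (1 - e) := by
        calc (x + (1 - e)) * (u + (1 - e))
            = x * u + (x - x * e) + (u - e * u) + (1 - e - e + e * e) := by noncomm_ring
          _ = x * u + (1 - e) := by rw [hxe, heu, hee]; abel
      rw [h1]
      calc (x * u + (1 - e)) * (x + (1 - e))
          = x * u * x + (x * u - x * (u * e)) + (x - e * x) + (1 - e - e + e * e) := by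
            noncomm_ring
        _ = x + (1 - e) := by rw [hxu, hue, hex, hee]; abel
  · rintro ⟨w, hw⟩
    have hef : e * (1 - e) = 0 := by rw [mul_sub, mul_one, hee, sub_self]
    have hfe : (1 - e) * e = 0 := by rw [sub_mul, one_mul, hee, sub_self]
    have hxf : x * (1 - e) = 0 := by rw [mul_sub, mul_one, hxe, sub_self]
    have hfx : (1 - e) * x = 0 := by rw [sub_mul, one_mul, hex, sub_self]
    have hey : e * (x + (1 - e)) = x := by rw [mul_add, hex, hef, add_zero]
    have hye : (x + (1 - e)) * e = x := by rw [add_mul, hxe, hfe, add_zero]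
    have hfy : (1 - e) * (x + (1 - e)) = 1 - e := by
      rw [mul_add, hfx, zero_add, mul_sub, mul_one, hfe, sub_zero]
    have hyf : (x + (1 - e)) * (1 - e) = 1 - e := by
      rw [add_mul, hxf, zero_add, sub_mul, one_mul, hef, sub_zero]
    have k1 : x * (w : R) * x = x := by
      calc x * (w : R) * x
          = (e * (x + (1 - e))) * (w : R) * ((x + (1 - e)) * e) := by rw [hey, hye]
        _ = e * ((x + (1 - e)) * (w : R) * (x + (1 - e))) * e := by noncomm_ring
        _ = e * (x + (1 - e)) * e := by rw [hw]
        _ = x := by rw [hey, hxe]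
    have k2 : x * (w : R) * (1 - e) = 0 := by
      calc x * (w : R) * (1 - e)
          = (e * (x + (1 - e))) * (w : R) * ((x + (1 - e)) * (1 - e)) := by rw [hey, hyf]
        _ = e * ((x + (1 - e)) * (w : R) * (x + (1 - e))) * (1 - e) := by noncomm_ring
        _ = e * (x + (1 - e)) * (1 - e) := by rw [hw]
        _ = 0 := by rw [hey, hxf]
    have k3 : (1 - e) * (w : R) * x = 0 := by
      calc (1 - e) * (w : R) * x
          = ((1 - e) * (x + (1 - e))) * (w : R) * ((x + (1 - e)) * e) := by rw [hfy, hye]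
        _ = (1 - e) * ((x + (1 - e)) * (w : R) * (x + (1 - e))) * e := by noncomm_ring
        _ = (1 - e) * (x + (1 - e)) * e := by rw [hw]
        _ = 0 := by rw [hfy, hfe]
    have k4 : (1 - e) * (w : R) * (1 - e) = 1 - e := by
      calc (1 - e) * (w : R) * (1 - e)
          = ((1 - e) * (x + (1 - e))) * (w : R) * ((x + (1 - e)) * (1 - e)) := by
            rw [hfy, hyf]
        _ = (1 - e) * ((x + (1 - e)) * (w : R) * (x + (1 - e))) * (1 - e) := by noncomm_ring
        _ = (1 - e) * (x + (1 - e)) * (1 - e) := by rw [hw]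
        _ = 1 - e := by
            rw [hfy, mul_sub, mul_one, hfe, sub_zero]
    have hbb : (e * (w : R) * (1 - e)) * (e * (w : R) * (1 - e)) = 0 := by
      calc (e * (w : R) * (1 - e)) * (e * (w : R) * (1 - e))
          = e * (w : R) * (((1 - e) * e) * ((w : R) * (1 - e))) := by noncomm_ring
        _ = 0 := by rw [hfe]; simp
    have hcc : ((1 - e) * (w : R) * e) * ((1 - e) * (w : R) * e) = 0 := by
      calc ((1 - e) * (w : R) * e) * ((1 - e) * (w : R) * e)
          = (1 - e) * (w : R) * ((e * (1 - e)) * ((w : R) * e)) := by noncomm_ring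
        _ = 0 := by rw [hef]; simp
    set D : R := (1 - e * (w : R) * (1 - e)) * (w : R) * (1 - (1 - e) * (w : R) * e)
      with hD
    set D' : R := (1 + (1 - e) * (w : R) * e) * ((w⁻¹ : Rˣ) : R) * (1 + e * (w : R) * (1 - e))
      with hD'
    have hDD' : D * D' = 1 := by
      rw [hD, hD']
      calc (1 - e * (w : R) * (1 - e)) * (w : R) * (1 - (1 - e) * (w : R) * e) *
            ((1 + (1 - e) * (w : R) * e) * ((w⁻¹ : Rˣ) : R) * (1 + e * (w : R) * (1 - e)))
          = (1 - e * (w : R) * (1 - e)) *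
              ((w : R) * (1 - ((1 - e) * (w : R) * e) * ((1 - e) * (w : R) * e)) *
                ((w⁻¹ : Rˣ) : R)) * (1 + e * (w : R) * (1 - e)) := by noncomm_ring
        _ = (1 - e * (w : R) * (1 - e)) * ((w : R) * 1 * ((w⁻¹ : Rˣ) : R)) *
              (1 + e * (w : R) * (1 - e)) := by rw [hcc, sub_zero]
        _ = (1 - e * (w : R) * (1 - e)) * (1 + e * (w : R) * (1 - e)) := by
            rw [mul_one, Units.mul_inv, mul_one]
        _ = 1 - (e * (w : R) * (1 - e)) * (e * (w : R) * (1 - e)) := by noncomm_ring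
        _ = 1 := by rw [hbb, sub_zero]
    have hD'D : D' * D = 1 := by
      rw [hD, hD']
      calc (1 + (1 - e) * (w : R) * e) * ((w⁻¹ : Rˣ) : R) * (1 + e * (w : R) * (1 - e)) *
            ((1 - e * (w : R) * (1 - e)) * (w : R) * (1 - (1 - e) * (w : R) * e))
          = (1 + (1 - e) * (w : R) * e) *
              (((w⁻¹ : Rˣ) : R) * (1 - (e * (w : R) * (1 - e)) * (e * (w : R) * (1 - e))) *
                (w : R)) * (1 - (1 - e) * (w : R) * e) := by noncomm_ring
        _ = (1 + (1 - e) * (w : R) * e) * (((w⁻¹ : Rˣ) : R) * 1 * (w : R)) *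
              (1 - (1 - e) * (w : R) * e) := by rw [hbb, sub_zero]
        _ = (1 + (1 - e) * (w : R) * e) * (1 - (1 - e) * (w : R) * e) := by
            rw [mul_one, Units.inv_mul, mul_one]
        _ = 1 - ((1 - e) * (w : R) * e) * ((1 - e) * (w : R) * e) := by noncomm_ring
        _ = 1 := by rw [hcc, sub_zero]
    have h2 : e * (e * (w : R) * (1 - e)) * ((w : R) * (1 - e)) = e * ((w : R) * (1 - e)) := by
      calc e * (e * (w : R) * (1 - e)) * ((w : R) * (1 - e))
          = (e * e) * ((w : R) * ((1 - e) * (w : R) * (1 - e))) := by noncomm_ring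
        _ = e * ((w : R) * (1 - e)) := by rw [hee, k4]
    have hCf : ((1 - e) * (w : R) * e) * (1 - e) = 0 := by
      calc ((1 - e) * (w : R) * e) * (1 - e)
          = (1 - e) * (w : R) * (e * (1 - e)) := by noncomm_ring
        _ = 0 := by rw [hef, mul_zero]
    have heDf : e * D * (1 - e) = 0 := by
      calc e * D * (1 - e)
          = e * ((w : R) * (1 - e)) - e * (e * (w : R) * (1 - e)) * ((w : R) * (1 - e)) -
              (e * (w : R) - e * (e * (w : R) * (1 - e)) * (w : R)) *
                (((1 - e) * (w : R) * e) * (1 - e)) := by rw [hD]; noncomm_ring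
        _ = 0 := by rw [h2, hCf]; simp
    have hfB : (1 - e) * (e * (w : R) * (1 - e)) = 0 := by
      calc (1 - e) * (e * (w : R) * (1 - e))
          = ((1 - e) * e) * ((w : R) * (1 - e)) := by noncomm_ring
        _ = 0 := by rw [hfe, zero_mul]
    have hCe : ((1 - e) * (w : R) * e) * e = (1 - e) * (w : R) * e := by
      rw [mul_assoc, hee]
    have h3 : (1 - e) * ((w : R) * ((1 - e) * (w : R) * e)) = (1 - e) * ((w : R) * e) := by
      calc (1 - e) * ((w : R) * ((1 - e) * (w : R) * e))
          = ((1 - e) * (w : R) * (1 - e)) * ((w : R) * e) := by noncomm_ring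
        _ = (1 - e) * ((w : R) * e) := by rw [k4]
    have hfDe : (1 - e) * D * e = 0 := by
      calc (1 - e) * D * e
          = (1 - e) * ((w : R) * e) -
              (1 - e) * ((w : R) * (((1 - e) * (w : R) * e) * e)) -
              ((1 - e) * (e * (w : R) * (1 - e))) *
                ((w : R) * (1 - (1 - e) * (w : R) * e) * e) := by rw [hD]; noncomm_ring
        _ = 0 := by rw [hCe, h3, hfB]; simp
    have heD : e * D = D * e := by
      have h4 : e * D * (1 - e) = e * D - e * D * e := by noncomm_ring
      have h5 : (1 - e) * D * e = D * e - e * D * e := by noncomm_ring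
      rw [h4] at heDf
      rw [h5] at hfDe
      have h6 : e * D = e * D * e := sub_eq_zero.mp heDf
      have h7 : D * e = e * D * e := sub_eq_zero.mp hfDe
      rw [h6, h7]
    have heD' : e * D' = D' * e := by
      calc e * D' = (D' * D) * (e * D') := by rw [hD'D, one_mul]
        _ = D' * ((D * e) * D') := by noncomm_ring
        _ = D' * ((e * D) * D') := by rw [heD]
        _ = (D' * e) * (D * D') := by noncomm_ring
        _ = D' * e := by rw [hDD', mul_one]
    have hu' : e * D * e = e * D := by
      rw [heD, mul_assoc, hee]
    have hv' : e * D' * e = e * D' := by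
      rw [heD', mul_assoc, hee]
    have hxB : x * (e * (w : R) * (1 - e)) = 0 := by
      calc x * (e * (w : R) * (1 - e))
          = (x * e) * ((w : R) * (1 - e)) := by noncomm_ring
        _ = x * (w : R) * (1 - e) := by rw [hxe, mul_assoc]
        _ = 0 := k2
    have hCx : ((1 - e) * (w : R) * e) * x = 0 := by
      calc ((1 - e) * (w : R) * e) * x
          = (1 - e) * (w : R) * (e * x) := by noncomm_ring
        _ = (1 - e) * (w : R) * x := by rw [hex]
        _ = 0 := k3
    refine ⟨e * D * e, e * D' * e, ?_, ?_, ?_, ?_, ?_⟩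
    · calc e * (e * D * e) * e = (e * e) * D * (e * e) := by noncomm_ring
        _ = e * D * e := by rw [hee]
    · calc e * (e * D' * e) * e = (e * e) * D' * (e * e) := by noncomm_ring
        _ = e * D' * e := by rw [hee]
    · rw [hu', hv']
      calc (e * D) * (e * D') = e * ((D * e) * D') := by noncomm_ring
        _ = e * ((e * D) * D') := by rw [heD]
        _ = (e * e) * (D * D') := by noncomm_ring
        _ = e := by rw [hee, hDD', mul_one]
    · rw [hu', hv']
      calc (e * D') * (e * D) = e * ((D' * e) * D) := by noncomm_ring
        _ = e * ((e * D') * D) := by rw [heD']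
        _ = (e * e) * (D' * D) := by noncomm_ring
        _ = e := by rw [hee, hD'D, mul_one]
    · calc x * (e * D * e) * x = (x * e) * D * (e * x) := by noncomm_ring
        _ = x * D * x := by rw [hxe, hex]
        _ = x * (w : R) * x - (x * (e * (w : R) * (1 - e))) * ((w : R) * x) -
              (x * (w : R)) * (((1 - e) * (w : R) * e) * x) +
              (x * (e * (w : R) * (1 - e))) * ((w : R) * (((1 - e) * (w : R) * e) * x)) := by
            rw [hD]; noncomm_ring
        _ = x := by rw [k1, hxB, hCx]; simp
end

section
/- Let R be a ring with suitabilizer operation ^s satisfying (1 − a^s a)(1 + (1 − a) a^s) = 0 for all a. Then for all a, b ∈ R, the element p := a(1 + (ba)^s(1 − ba))ba is regular with inner inverse q := (1 + (ba)^s(1 − ba))b, i.e., pqp = p. Moreover, every regular element c of R arises this way: taking a = c and b = d for any inner inverse d of c gives p = c. -/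
/-- Key lemma: `(1 + t(1-x))x` is idempotent whenever `(1 - tx)(1 + (1-x)t) = 0`. -/
lemma suitabilizer_idem {R : Type*} [Ring R] (x t : R)
    (h : (1 - t * x) * (1 + (1 - x) * t) = 0) :
    ((1 + t * (1 - x)) * x) * ((1 + t * (1 - x)) * x) = (1 + t * (1 - x)) * x := by
  have h1 : (1 - t * x) * ((1 - x) * t) = -(1 - t * x) := by
    have e : (1 - t * x) + (1 - t * x) * ((1 - x) * t)
        = (1 - t * x) * (1 + (1 - x) * t) := by noncomm_ring
    rw [h] at e
    exact eq_neg_of_add_eq_zero_right e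
  have h2 : (1 - t * x) * ((1 - x) * (1 - t * x)) = 1 - t * x := by
    have e : (1 - t * x) * ((1 - x) * (1 - t * x))
        = (1 - t * x) * (1 - x) - ((1 - t * x) * ((1 - x) * t)) * x + ((1 - t*x) - (1 - t*x)) := by
      noncomm_ring
    rw [h1] at e
    rw [e]; noncomm_ring
  have e3 : ((1 + t * (1 - x)) * x) * ((1 + t * (1 - x)) * x) - (1 + t * (1 - x)) * x
      = ((1 - t * x) * ((1 - x) * (1 - t * x)) - (1 - t * x)) * (1 - x) := by
    noncomm_ring
  have e4 : ((1 + t * (1 - x)) * x) * ((1 + t * (1 - x)) * x) - (1 + t * (1 - x)) * x = 0 := by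
    rw [e3, h2, sub_self, zero_mul]
  exact sub_eq_zero.mp e4

theorem suitabilizer_regular_elements {R : Type*} [Ring R] (s : R → R)
    (hs : ∀ a : R, (1 - s a * a) * (1 + (1 - a) * s a) = 0) :
    (∀ a b : R,
      (a * (1 + s (b * a) * (1 - b * a)) * b * a) *
        ((1 + s (b * a) * (1 - b * a)) * b) *
        (a * (1 + s (b * a) * (1 - b * a)) * b * a) =
      a * (1 + s (b * a) * (1 - b * a)) * b * a) ∧
    (∀ c d : R, c * d * c = c →
      c * (1 + s (d * c) * (1 - d * c)) * d * c = c) := by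
  constructor
  · intro a b
    have hE := suitabilizer_idem (b * a) (s (b * a)) (hs (b * a))
    calc (a * (1 + s (b * a) * (1 - b * a)) * b * a) *
          ((1 + s (b * a) * (1 - b * a)) * b) *
          (a * (1 + s (b * a) * (1 - b * a)) * b * a)
        = a * ((((1 + s (b * a) * (1 - b * a)) * (b * a)) *
            ((1 + s (b * a) * (1 - b * a)) * (b * a))) *
            ((1 + s (b * a) * (1 - b * a)) * (b * a))) := by noncomm_ring
      _ = a * ((1 + s (b * a) * (1 - b * a)) * (b * a)) := by rw [hE, hE]
      _ = a * (1 + s (b * a) * (1 - b * a)) * b * a := by noncomm_ring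
  · intro c d h
    have hx : (d * c) * (d * c) = d * c := by
      calc (d * c) * (d * c) = d * (c * d * c) := by noncomm_ring
        _ = d * c := by rw [h]
    calc c * (1 + s (d * c) * (1 - d * c)) * d * c
        = c * (d * c) + (c * s (d * c)) * ((d * c) - (d * c) * (d * c)) := by noncomm_ring
      _ = c * (d * c) := by rw [hx, sub_self, mul_zero, add_zero]
      _ = c := by rw [← mul_assoc, h]
end

section
/- Let R be an exchange ring (in the sense that, given any finite family of right ideals N_i with R = Σ N_i, there exist N_i' ⊆ N_i with R = ⊕ N_i'). If a, b ∈ R satisfy aR + bR = R, then there exists an idempotent e ∈ aR with 1 − e ∈ bR. Moreover, for any given idempotent f ∈ aR, one can choose e so that f ∈ eR; in particular, if aR is a direct summand of R_R, then one can choose e with eR = aR. -/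
open Submodule

/-- `R` is an exchange ring, via property `(N)_finite` for the right module `R_R`:
any finite sum decomposition `R = Σ N i` refines to an independent direct-sum
decomposition `R = ⊕ N' i` with `N' i ≤ N i`.  (Right ideals are `Rᵐᵒᵖ`-submodules.) -/
def ExchangeRing (R : Type*) [Ring R] : Prop :=
  ∀ (ι : Type) [Finite ι] (N : ι → Submodule Rᵐᵒᵖ R), (⨆ i, N i) = ⊤ →
    ∃ N' : ι → Submodule Rᵐᵒᵖ R, (∀ i, N' i ≤ N i) ∧ iSupIndep N' ∧ (⨆ i, N' i) = ⊤

section Aux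

open MulOpposite

variable {R : Type*} [Ring R]

/-- A right ideal is closed under right multiplication. -/
private lemma mul_right_mem (P : Submodule Rᵐᵒᵖ R) {x : R} (h : x ∈ P) (t : R) :
    x * t ∈ P := by
  simpa [op_smul_eq_mul] using P.smul_mem (op t) h

private lemma exists_eq_mul {x g : R} (h : x ∈ span Rᵐᵒᵖ {g}) : ∃ t : R, x = g * t := by
  rw [Submodule.mem_span_singleton] at h
  obtain ⟨c, hc⟩ := h
  refine ⟨c.unop, ?_⟩
  rw [← hc]
  conv_lhs => rw [← op_unop c]
  rw [op_smul_eq_mul]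

private lemma eq_top_of_one_mem (P : Submodule Rᵐᵒᵖ R) (h : (1 : R) ∈ P) : P = ⊤ := by
  rw [eq_top_iff]
  intro x _
  simpa [op_smul_eq_mul] using P.smul_mem (op x) h

private lemma span_singleton_le_of_mem {x : R} {P : Submodule Rᵐᵒᵖ R} (h : x ∈ P) :
    span Rᵐᵒᵖ {x} ≤ P := by
  rw [span_le, Set.singleton_subset_iff]; exact h

/-- Key lemma: given an idempotent `f ∈ aR`, there is an idempotent `e ∈ aR` with
`1 - e ∈ bR` and `e * f = f`. -/
private lemma exchange_key (hR : ExchangeRing R) (a b f : R)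
    (hf : f * f = f) (hfa : f ∈ span Rᵐᵒᵖ {a})
    (hab : (span Rᵐᵒᵖ {a} : Submodule Rᵐᵒᵖ R) ⊔ span Rᵐᵒᵖ {b} = ⊤) :
    ∃ e : R, e * e = e ∧ e ∈ span Rᵐᵒᵖ {a} ∧ 1 - e ∈ span Rᵐᵒᵖ {b} ∧ e * f = f := by
  have hf0 : f * (1 - f) = 0 := by rw [mul_sub, mul_one, hf, sub_self]
  -- write 1 = u + v with u ∈ aR, v ∈ bR
  have h1 : (1 : R) ∈ (span Rᵐᵒᵖ {a} : Submodule Rᵐᵒᵖ R) ⊔ span Rᵐᵒᵖ {b} := by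
    rw [hab]; trivial
  rw [Submodule.mem_sup] at h1
  obtain ⟨u, hu, v, hv, huv⟩ := h1
  set g₁ := (1 - f) * u with hg₁
  set g₂ := (1 - f) * v with hg₂
  have hsum1 : f + g₁ + g₂ = 1 := by
    have h' : g₁ + g₂ = (1 - f) * (u + v) := (mul_add _ _ _).symm
    rw [add_assoc, h', huv, mul_one]
    abel
  -- apply the exchange property to the three right ideals
  set N : Fin 3 → Submodule Rᵐᵒᵖ R :=
    ![span Rᵐᵒᵖ {f}, span Rᵐᵒᵖ {g₁}, span Rᵐᵒᵖ {g₂}] with hNdef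
  have hN0 : N 0 = span Rᵐᵒᵖ {f} := by simp [hNdef]
  have hN1 : N 1 = span Rᵐᵒᵖ {g₁} := by simp [hNdef]
  have hN2 : N 2 = span Rᵐᵒᵖ {g₂} := by simp [hNdef]
  have hNtop : (⨆ i, N i) = ⊤ := by
    apply eq_top_of_one_mem
    rw [← hsum1]
    refine add_mem (add_mem ?_ ?_) ?_
    · exact Submodule.mem_iSup_of_mem 0 (hN0 ▸ subset_span rfl)
    · exact Submodule.mem_iSup_of_mem 1 (hN1 ▸ subset_span rfl)
    · exact Submodule.mem_iSup_of_mem 2 (hN2 ▸ subset_span rfl)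
  obtain ⟨N', hle, hind, htop⟩ := hR (Fin 3) N hNtop
  -- decompose 1 = p + q + r
  have hsup3 : (⨆ i, N' i) ≤ N' 0 ⊔ N' 1 ⊔ N' 2 := by
    apply iSup_le; intro i
    fin_cases i
    · exact le_sup_of_le_left le_sup_left
    · exact le_sup_of_le_left le_sup_right
    · exact le_sup_right
  have h1' : (1 : R) ∈ N' 0 ⊔ N' 1 ⊔ N' 2 := by
    refine hsup3 ?_
    rw [htop]; trivial
  rw [Submodule.mem_sup] at h1'
  obtain ⟨pq, hpq, r, hr, hsum⟩ := h1'
  rw [Submodule.mem_sup] at hpq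
  obtain ⟨p, hp, q, hq, rfl⟩ := hpq
  -- left multiplications by f
  have hfq : f * q = 0 := by
    obtain ⟨s, hs⟩ := exists_eq_mul (hN1 ▸ hle 1 hq)
    rw [hs, hg₁, ← mul_assoc, ← mul_assoc, hf0, zero_mul, zero_mul]
  have hfr : f * r = 0 := by
    obtain ⟨s, hs⟩ := exists_eq_mul (hN2 ▸ hle 2 hr)
    rw [hs, hg₂, ← mul_assoc, ← mul_assoc, hf0, zero_mul, zero_mul]
  have hfp : f * p = p := by
    obtain ⟨t, ht⟩ := exists_eq_mul (hN0 ▸ hle 0 hp)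
    rw [ht, ← mul_assoc, hf]
  have hpf : p = f := by
    have h' := congrArg (fun x => f * x) hsum
    simpa [mul_add, hfp, hfq, hfr] using h'
  rw [hpf] at hsum hp
  -- orthogonality from independence
  have hdis12 : Disjoint (N' 1) (N' 2) := hind.pairwiseDisjoint (by decide)
  have hqfN : q * f ∈ N' 1 := by
    simpa [op_smul_eq_mul] using (N' 1).smul_mem (op f) hq
  have hrfN : r * f ∈ N' 2 := by
    simpa [op_smul_eq_mul] using (N' 2).smul_mem (op f) hr
  have hqf_rf : q * f + r * f = 0 := by
    have h' := congrArg (fun x => x * f) hsum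
    simp only [add_mul, one_mul, hf] at h'
    -- h' : f + q * f + r * f = f
    have h'' : f + (q * f + r * f) = f + 0 := by rw [add_zero, ← add_assoc, h']
    exact add_left_cancel h''
  have hqf : q * f = 0 := by
    refine Submodule.disjoint_def.mp hdis12 _ hqfN ?_
    have h' : q * f = -(r * f) := by
      rw [eq_neg_iff_add_eq_zero]; exact hqf_rf
    rw [h']; exact (N' 2).neg_mem hrfN
  have hrf : r * f = 0 := by
    have h' := hqf_rf; rw [hqf, zero_add] at h'; exact h'
  -- q and r are orthogonal idempotents
  have hqr_eq : q * r = q - q * q := by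
    have h' := congrArg (fun x => q * x) hsum
    simp only [mul_add, mul_one] at h'
    rw [hqf, zero_add] at h'
    exact eq_sub_of_add_eq' h'
  have hrq_eq : r * q = q - q * q := by
    have h' := congrArg (fun x => x * q) hsum
    simp only [add_mul, one_mul] at h'
    rw [hfq, zero_add] at h'
    exact eq_sub_of_add_eq' h'
  have hqrN : q * r ∈ N' 1 := by
    simpa [op_smul_eq_mul] using (N' 1).smul_mem (op r) hq
  have hrqN : r * q ∈ N' 2 := by
    simpa [op_smul_eq_mul] using (N' 2).smul_mem (op q) hr
  have hqr : q * r = 0 := by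
    refine Submodule.disjoint_def.mp hdis12 _ hqrN ?_
    rw [hqr_eq, ← hrq_eq]; exact hrqN
  have hqq : q * q = q := by
    have h0 : q - q * q = 0 := by rw [← hqr_eq]; exact hqr
    rw [sub_eq_zero] at h0; exact h0.symm
  have hrq : r * q = 0 := by rw [hrq_eq, hqq, sub_self]
  have hrr : r * r = r := by
    have h' := congrArg (fun x => r * x) hsum
    simp only [mul_add, mul_one] at h'
    rw [hrf, hrq, zero_add, zero_add] at h'
    exact h'
  -- normalize the generator witness for r
  obtain ⟨k₀, hk₀⟩ := exists_eq_mul (hN2 ▸ hle 2 hr)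
  set k := k₀ * r with hkdef
  have hgk : g₂ * k = r := by
    rw [hkdef, ← mul_assoc, ← hk₀, hrr]
  have hkf : k * f = 0 := by rw [hkdef, mul_assoc, hrf, mul_zero]
  have hkq : k * q = 0 := by rw [hkdef, mul_assoc, hrq, mul_zero]
  set w := v * k with hwdef
  have hwf : w * f = 0 := by rw [hwdef, mul_assoc, hkf, mul_zero]
  have hwq : w * q = 0 := by rw [hwdef, mul_assoc, hkq, mul_zero]
  -- the idempotent e
  set e := f + q - f * w with hedef
  have hfw : f * (f * w) = f * w := by rw [← mul_assoc, hf]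
  have hqfw : q * (f * w) = 0 := by rw [← mul_assoc, hqf, zero_mul]
  have hfwf : f * w * f = 0 := by rw [mul_assoc, hwf, mul_zero]
  have hfwq : f * w * q = 0 := by rw [mul_assoc, hwq, mul_zero]
  have hfwfw : f * w * (f * w) = 0 := by
    rw [mul_assoc f w, ← mul_assoc w, hwf, zero_mul, mul_zero]
  have hee : e * e = e := by
    have expand : e * e =
        f * f + f * q + q * f + q * q - f * (f * w) - q * (f * w)
          - f * w * f - f * w * q + f * w * (f * w) := by
      rw [hedef]; noncomm_ring
    rw [hf, hfq, hqf, hqq, hfw, hqfw, hfwf, hfwq, hfwfw] at expand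
    rw [expand, hedef]
    abel
  have hef : e * f = f := by
    have expand : e * f = f * f + q * f - f * w * f := by
      rw [hedef]; noncomm_ring
    rw [hf, hqf, hfwf] at expand
    rw [expand]; abel
  have hea : e ∈ span Rᵐᵒᵖ {a} := by
    have hg₁a : g₁ ∈ span Rᵐᵒᵖ {a} := by
      rw [hg₁, sub_mul, one_mul]
      exact sub_mem hu (mul_right_mem _ hfa u)
    have hqa : q ∈ span Rᵐᵒᵖ {a} :=
      ((hle 1).trans (hN1 ▸ span_singleton_le_of_mem hg₁a)) hq
    exact sub_mem (add_mem hfa hqa) (mul_right_mem _ hfa w)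
  have h1e : 1 - e ∈ span Rᵐᵒᵖ {b} := by
    have h'' : 1 - e = r + f * w := by
      rw [hedef, ← hsum]; noncomm_ring
    have h3 : r + f * w = v * k := by
      rw [← hgk, hg₂, hwdef]; noncomm_ring
    rw [h'', h3]
    exact mul_right_mem _ hv k
  exact ⟨e, hee, hea, h1e, hef⟩

end Aux

theorem exchange_idempotent_lift {R : Type*} [Ring R] (hR : ExchangeRing R)
    (a b : R)
    (hab : (span Rᵐᵒᵖ {a} : Submodule Rᵐᵒᵖ R) ⊔ span Rᵐᵒᵖ {b} = ⊤) :
    (∃ e : R, IsIdempotentElem e ∧ e ∈ span Rᵐᵒᵖ {a} ∧ 1 - e ∈ span Rᵐᵒᵖ {b}) ∧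
    (∀ f : R, IsIdempotentElem f → f ∈ span Rᵐᵒᵖ {a} →
      ∃ e : R, IsIdempotentElem e ∧ e ∈ span Rᵐᵒᵖ {a} ∧ 1 - e ∈ span Rᵐᵒᵖ {b} ∧
        f ∈ span Rᵐᵒᵖ {e}) ∧
    ((∃ Y : Submodule Rᵐᵒᵖ R, IsCompl (span Rᵐᵒᵖ {a}) Y) →
      ∃ e : R, IsIdempotentElem e ∧ e ∈ span Rᵐᵒᵖ {a} ∧ 1 - e ∈ span Rᵐᵒᵖ {b} ∧
        (span Rᵐᵒᵖ {e} : Submodule Rᵐᵒᵖ R) = span Rᵐᵒᵖ {a}) := by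
  refine ⟨?_, ?_, ?_⟩
  · obtain ⟨e, he, h1, h2, -⟩ :=
      exchange_key hR a b 0 (mul_zero 0) (zero_mem _) hab
    exact ⟨e, he, h1, h2⟩
  · intro f hf hfa
    obtain ⟨e, he, h1, h2, hef⟩ := exchange_key hR a b f hf.eq hfa hab
    have hfe : f ∈ span Rᵐᵒᵖ {e} := by
      rw [← hef]
      exact mul_right_mem _ (mem_span_singleton_self e) f
    exact ⟨e, he, h1, h2, hfe⟩
  · rintro ⟨Y, hY⟩
    -- produce an idempotent generator f of aR
    have htop' : (span Rᵐᵒᵖ {a} : Submodule Rᵐᵒᵖ R) ⊔ Y = ⊤ := hY.codisjoint.eq_top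
    have h1m : (1 : R) ∈ (span Rᵐᵒᵖ {a} : Submodule Rᵐᵒᵖ R) ⊔ Y := by
      rw [htop']; trivial
    rw [Submodule.mem_sup] at h1m
    obtain ⟨f, hfa, y, hy, hfy⟩ := h1m
    have hdis := hY.disjoint
    have hyf : y = 1 - f := by rw [← hfy]; abel
    have hf : f * f = f := by
      have hx1 : f - f * f ∈ span Rᵐᵒᵖ {a} := sub_mem hfa (mul_right_mem _ hfa f)
      have hx2 : f - f * f ∈ Y := by
        have h' : f - f * f = y * f := by rw [hyf, sub_mul, one_mul]
        rw [h']; exact mul_right_mem _ hy f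
      have h0 := Submodule.disjoint_def.mp hdis _ hx1 hx2
      rw [sub_eq_zero] at h0; exact h0.symm
    have haf : a ∈ span Rᵐᵒᵖ {f} := by
      have k1 : a - f * a ∈ span Rᵐᵒᵖ {a} :=
        sub_mem (mem_span_singleton_self a) (mul_right_mem _ hfa a)
      have k2 : a - f * a ∈ Y := by
        have h' : a - f * a = y * a := by rw [hyf, sub_mul, one_mul]
        rw [h']; exact mul_right_mem _ hy a
      have h0 := Submodule.disjoint_def.mp hdis _ k1 k2
      rw [sub_eq_zero] at h0
      rw [h0]; exact mul_right_mem _ (mem_span_singleton_self f) a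
    obtain ⟨e, he, h1, h2, hef⟩ := exchange_key hR a b f hf hfa hab
    refine ⟨e, he, h1, h2, le_antisymm (span_singleton_le_of_mem h1) ?_⟩
    have hfe : f ∈ span Rᵐᵒᵖ {e} := by
      rw [← hef]; exact mul_right_mem _ (mem_span_singleton_self e) f
    exact (span_singleton_le_of_mem haf).trans (span_singleton_le_of_mem hfe)
end

section
/- Let R be an exchange ring and a, b ∈ R with aR + bR = pR for some idempotent p. Then there exist orthogonal idempotents e ∈ aR and f ∈ bR with e + f = p. Moreover, given any idempotent q ∈ aR, e can be chosen so that q ∈ eR; in particular if aR is a direct summand of R_R one may take eR = aR. -/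
open Submodule

section Aux
variable {R : Type*} [Ring R]


lemma ExchAux.memS {c x : R} : x ∈ span Rᵐᵒᵖ ({c} : Set R) ↔ ∃ r, x = c * r := by
  rw [Submodule.mem_span_singleton]
  constructor
  · rintro ⟨r, rfl⟩
    exact ⟨r.unop, rfl⟩
  · rintro ⟨r, rfl⟩
    exact ⟨MulOpposite.op r, rfl⟩

lemma ExchAux.mulr {S : Submodule Rᵐᵒᵖ R} {x : R} (h : x ∈ S) (r : R) : x * r ∈ S :=
  S.smul_mem (MulOpposite.op r) h

lemma ExchAux.uniq {ι : Type} [Fintype ι] [DecidableEq ι] {N : ι → Submodule Rᵐᵒᵖ R}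
    (h : iSupIndep N) {y : ι → R} (hy : ∀ i, y i ∈ N i) (hs : ∑ i, y i = 0) (i : ι) :
    y i = 0 := by
  have h2 : y i + ∑ j ∈ Finset.univ.erase i, y j = 0 := by
    rw [Finset.add_sum_erase _ _ (Finset.mem_univ i)]; exact hs
  have h1 : y i ∈ ⨆ (j) (_ : j ≠ i), N j := by
    rw [eq_neg_of_add_eq_zero_left h2]
    exact neg_mem (Submodule.sum_mem _ fun j hj =>
      Submodule.mem_iSup_of_mem j (Submodule.mem_iSup_of_mem (Finset.ne_of_mem_erase hj) (hy j)))
  exact (Submodule.disjoint_def.mp (h i)) _ (hy i) h1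

lemma ExchAux.decomp {ι : Type} [Fintype ι] {N : ι → Submodule Rᵐᵒᵖ R}
    (h : ⨆ i, N i = ⊤) : ∃ x : ι → R, (∀ i, x i ∈ N i) ∧ ∑ i, x i = 1 := by
  have h1 : (1 : R) ∈ ⨆ i, N i := h ▸ Submodule.mem_top
  obtain ⟨f, hf, hsum⟩ := (Submodule.mem_iSup_iff_exists_finsupp N 1).mp h1
  refine ⟨f, hf, ?_⟩
  rwa [Finsupp.sum_fintype _ _ (fun i => rfl)] at hsum

open ExchAux in
lemma ExchAux.core (hR : ExchangeRing R) (a b p : R) (hp : IsIdempotentElem p)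
    (hab : (span Rᵐᵒᵖ {a} : Submodule Rᵐᵒᵖ R) ⊔ span Rᵐᵒᵖ {b} = span Rᵐᵒᵖ {p})
    (q : R) (hq : IsIdempotentElem q) (hqa : q ∈ (span Rᵐᵒᵖ {a} : Submodule Rᵐᵒᵖ R)) :
    ∃ e f : R, IsIdempotentElem e ∧ IsIdempotentElem f ∧ e * f = 0 ∧ f * e = 0 ∧
      e ∈ span Rᵐᵒᵖ {a} ∧ f ∈ span Rᵐᵒᵖ {b} ∧ e + f = p ∧ q ∈ span Rᵐᵒᵖ {e} := by
  classical
  -- basic facts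
  have hpa : p * a = a := by
    obtain ⟨r, hr⟩ := memS.mp (hab ▸ Submodule.mem_sup_left (Submodule.mem_span_singleton_self a))
    rw [hr, ← mul_assoc, hp.eq]
  have hpb : p * b = b := by
    obtain ⟨r, hr⟩ := memS.mp (hab ▸ Submodule.mem_sup_right (Submodule.mem_span_singleton_self b))
    rw [hr, ← mul_assoc, hp.eq]
  have hpq : p * q = q := by
    obtain ⟨r, hr⟩ := memS.mp (hab ▸ Submodule.mem_sup_left hqa)
    rw [hr, ← mul_assoc, hp.eq]
  have hq1q : q * (1 - q) = 0 := by rw [mul_sub, mul_one, hq.eq, sub_self]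
  -- write p = u + v with u ∈ aR, v ∈ bR
  obtain ⟨u, hu, v, hv, huv⟩ := Submodule.mem_sup.mp
    (hab ▸ Submodule.mem_span_singleton_self p : p ∈ (span Rᵐᵒᵖ {a} : Submodule Rᵐᵒᵖ R) ⊔ span Rᵐᵒᵖ {b})
  obtain ⟨ru, hru⟩ := memS.mp hu
  obtain ⟨rv, hrv⟩ := memS.mp hv
  -- the family
  set c : Fin 4 → R := ![q, (1 - q) * a, (1 - q) * b, (1 - q) * (1 - p)] with hc
  set N : Fin 4 → Submodule Rᵐᵒᵖ R := fun i => span Rᵐᵒᵖ {c i} with hN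
  have hN0 : N 0 = span Rᵐᵒᵖ {q} := by simp [hN, hc]
  have hN1 : N 1 = span Rᵐᵒᵖ {(1 - q) * a} := by simp [hN, hc]
  have hN2 : N 2 = span Rᵐᵒᵖ {(1 - q) * b} := by simp [hN, hc]
  have hN3 : N 3 = span Rᵐᵒᵖ {(1 - q) * (1 - p)} := by simp [hN, hc]
  have htop : (⨆ i, N i) = ⊤ := by
    rw [eq_top_iff]
    rintro z -
    have key : q * z + ((1 - q) * a) * (ru * z) + ((1 - q) * b) * (rv * z)
        + ((1 - q) * (1 - p)) * z = z := by
      have e1 : ((1 - q) * a) * (ru * z) = (1 - q) * (u * z) := by rw [hru]; noncomm_ring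
      have e2 : ((1 - q) * b) * (rv * z) = (1 - q) * (v * z) := by rw [hrv]; noncomm_ring
      rw [e1, e2, ← huv]; noncomm_ring
    rw [← key]
    refine add_mem (add_mem (add_mem ?_ ?_) ?_) ?_
    · exact Submodule.mem_iSup_of_mem 0 (hN0 ▸ memS.mpr ⟨z, rfl⟩)
    · exact Submodule.mem_iSup_of_mem 1 (hN1 ▸ memS.mpr ⟨ru * z, rfl⟩)
    · exact Submodule.mem_iSup_of_mem 2 (hN2 ▸ memS.mpr ⟨rv * z, rfl⟩)
    · exact Submodule.mem_iSup_of_mem 3 (hN3 ▸ memS.mpr ⟨z, rfl⟩)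
  obtain ⟨N', hle, hind, htop'⟩ := hR (Fin 4) N htop
  -- restore the full slot qR
  set K : Fin 4 → Submodule Rᵐᵒᵖ R := fun i => if i = 0 then span Rᵐᵒᵖ {q} else N' i with hK
  have hK0 : K 0 = span Rᵐᵒᵖ {q} := by simp [hK]
  have hKne : ∀ i : Fin 4, i ≠ 0 → K i = N' i := fun i hi => by simp [hK, hi]
  have hNK : ∀ i, N' i ≤ K i := by
    intro i
    by_cases h : i = 0
    · subst h; rw [hK0, ← hN0]; exact hle 0
    · rw [hKne i h]
  have hKtop : (⨆ i, K i) = ⊤ := top_unique (htop' ▸ iSup_mono hNK)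
  -- q kills the other slots, fixes slot 0
  have hfix : ∀ z ∈ K 0, q * z = z := by
    intro z hz
    obtain ⟨r, hr⟩ := memS.mp (hK0 ▸ hz)
    rw [hr, ← mul_assoc, hq.eq]
  have hkill : ∀ i : Fin 4, i ≠ 0 → ∀ z ∈ K i, q * z = 0 := by
    intro i hi z hz
    have hz' : z ∈ N i := hle i ((hKne i hi) ▸ hz)
    have : ∀ d r : R, q * (((1 - q) * d) * r) = 0 := by
      intro d r
      calc q * (((1 - q) * d) * r) = (q * (1 - q)) * (d * r) := by noncomm_ring
        _ = 0 := by rw [hq1q, zero_mul]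
    fin_cases i
    · exact absurd rfl hi
    · obtain ⟨r, hr⟩ := memS.mp (hN1 ▸ hz'); rw [hr]; exact this a r
    · obtain ⟨r, hr⟩ := memS.mp (hN2 ▸ hz'); rw [hr]; exact this b r
    · obtain ⟨r, hr⟩ := memS.mp (hN3 ▸ hz'); rw [hr]; exact this (1 - p) r
  -- uniqueness of decompositions w.r.t. K
  have hKuniq : ∀ y : Fin 4 → R, (∀ i, y i ∈ K i) → (∑ i, y i) = 0 → ∀ i, y i = 0 := by
    intro y hy hs
    have h0 : y 0 = 0 := by
      have hqs : ∑ i, q * y i = 0 := by rw [← Finset.mul_sum, hs, mul_zero]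
      have : ∑ i, q * y i = y 0 := by
        rw [Fin.sum_univ_four, hfix _ (hy 0), hkill 1 (by decide) _ (hy 1),
          hkill 2 (by decide) _ (hy 2), hkill 3 (by decide) _ (hy 3)]
        abel
      rw [this] at hqs; exact hqs
    intro i
    rcases eq_or_ne i 0 with rfl | hi
    · exact h0
    have hz := uniq hind (y := Function.update y 0 0) ?_ ?_ i
    · rwa [Function.update_of_ne hi] at hz
    · intro j
      rcases eq_or_ne j 0 with rfl | hj
      · rw [Function.update_self]; exact zero_mem _
      · rw [Function.update_of_ne hj, ← hKne j hj]; exact hy j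
    · rw [Finset.sum_update_of_mem (Finset.mem_univ 0), zero_add]
      have h2 : y 0 + ∑ j ∈ Finset.univ.erase 0, y j = 0 := by
        rw [Finset.add_sum_erase _ _ (Finset.mem_univ 0)]; exact hs
      rw [h0, zero_add] at h2; exact h2
  -- decomposition of 1
  obtain ⟨x, hxK, hxsum⟩ := decomp hKtop
  have hsum4 : x 0 + x 1 + x 2 + x 3 = 1 := by rw [← Fin.sum_univ_four x]; exact hxsum
  -- components
  have hcomp : ∀ (j : Fin 4) (r : R), r ∈ K j → ∀ i, x i * r = if i = j then r else 0 := by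
    intro j r hr i
    have h := hKuniq (fun i => x i * r - if i = j then r else 0) ?_ ?_ i
    · have := sub_eq_zero.mp h; simpa using this
    · intro k
      by_cases h : k = j
      · subst h; simp only [if_pos rfl]; exact sub_mem (mulr (hxK k) r) hr
      · simp only [if_neg h, sub_zero]; exact mulr (hxK k) r
    · rw [Finset.sum_sub_distrib, ← Finset.sum_mul, hxsum, one_mul]
      simp
  have hq0 : q ∈ K 0 := hK0 ▸ memS.mpr ⟨1, (mul_one q).symm⟩
  have horth : ∀ i j : Fin 4, i ≠ j → x i * x j = 0 := by
    intro i j hij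
    have := hcomp j (x j) (hxK j) i; rwa [if_neg hij] at this
  have hidem : ∀ j : Fin 4, x j * x j = x j := by
    intro j
    have := hcomp j (x j) (hxK j) j; rwa [if_pos rfl] at this
  have hxiq : ∀ i : Fin 4, i ≠ 0 → x i * q = 0 := by
    intro i hi
    have := hcomp 0 q hq0 i; rwa [if_neg hi] at this
  have hqxi : ∀ i : Fin 4, i ≠ 0 → q * x i = 0 := fun i hi => hkill i hi _ (hxK i)
  have hx0 : x 0 = q := by
    have h1 : q * (x 0 + x 1 + x 2 + x 3) = q := by rw [hsum4, mul_one]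
    rw [mul_add, mul_add, mul_add, hfix _ (hxK 0), hqxi 1 (by decide), hqxi 2 (by decide),
      hqxi 3 (by decide), add_zero, add_zero, add_zero] at h1
    exact h1
  -- extract the y's
  obtain ⟨r1, hr1⟩ := memS.mp (hN1 ▸ hle 1 (hKne 1 (by decide) ▸ hxK 1))
  obtain ⟨r2, hr2⟩ := memS.mp (hN2 ▸ hle 2 (hKne 2 (by decide) ▸ hxK 2))
  obtain ⟨r3, hr3⟩ := memS.mp (hN3 ▸ hle 3 (hKne 3 (by decide) ▸ hxK 3))
  set y1 : R := a * r1 with hy1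
  set y2 : R := b * r2 with hy2
  set y3 : R := (1 - p) * r3 with hy3
  have hx1y : x 1 = y1 - q * y1 := by rw [hr1, hy1]; noncomm_ring
  have hx2y : x 2 = y2 - q * y2 := by rw [hr2, hy2]; noncomm_ring
  have hx3y : x 3 = y3 - q * y3 := by rw [hr3, hy3]; noncomm_ring
  -- package: Y i, with x i = Y i - q * Y i for i ≠ 0
  set Y : Fin 4 → R := ![0, y1, y2, y3] with hY
  have hxY : ∀ i : Fin 4, i ≠ 0 → x i = Y i - q * Y i := by
    intro i hi; fin_cases i
    · exact absurd rfl hi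
    · simpa [hY] using hx1y
    · simpa [hY] using hx2y
    · simpa [hY] using hx3y
  have hYd : ∀ j : Fin 4, j ≠ 0 → Y j = x j + q * Y j := by
    intro j hj; conv_rhs => rw [hxY j hj]
    abel
  have hxy : ∀ i j : Fin 4, i ≠ 0 → j ≠ 0 → x i * Y j = if i = j then x i else 0 := by
    intro i j hi hj
    conv_lhs => rw [hYd j hj]
    rw [mul_add, ← mul_assoc, hxiq i hi, zero_mul, add_zero]
    by_cases h : i = j
    · subst h; rw [if_pos rfl, hidem]
    · rw [if_neg h, horth i j h]
  -- the w's
  set w : Fin 4 → R := fun i => Y i * x i with hw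
  have hww : ∀ i j : Fin 4, i ≠ 0 → j ≠ 0 → w i * w j = if i = j then w i else 0 := by
    intro i j hi hj
    have h1 : (Y i * x i) * (Y j * x j) = Y i * ((x i * Y j) * x j) := by noncomm_ring
    rw [hw]
    simp only []
    rw [h1, hxy i j hi hj]
    by_cases h : i = j
    · subst h; rw [if_pos rfl, if_pos rfl, hidem]
    · rw [if_neg h, if_neg h, zero_mul, mul_zero]
  have hwq : ∀ i : Fin 4, i ≠ 0 → w i * q = 0 := by
    intro i hi
    rw [hw]; simp only []
    rw [mul_assoc, hxiq i hi, mul_zero]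
  have hxw : ∀ i : Fin 4, i ≠ 0 → x i = w i - q * w i := by
    intro i hi
    have h1 : w i = x i + q * w i := by
      rw [hw]; simp only []
      conv_lhs => rw [hYd i hi]
      rw [add_mul, hidem, mul_assoc]
    rw [eq_sub_iff_add_eq]; exact h1.symm
  -- specific product facts
  have h11 : w 1 * w 1 = w 1 := by simpa using hww 1 1 (by decide) (by decide)
  have h22 : w 2 * w 2 = w 2 := by simpa using hww 2 2 (by decide) (by decide)
  have h33 : w 3 * w 3 = w 3 := by simpa using hww 3 3 (by decide) (by decide)
  have h23 : w 2 * w 3 = 0 := by simpa using hww 2 3 (by decide) (by decide)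
  have h32 : w 3 * w 2 = 0 := by simpa using hww 3 2 (by decide) (by decide)
  have hY1 : Y 1 = y1 := by simp [hY]
  have hY2 : Y 2 = y2 := by simp [hY]
  have hY3 : Y 3 = y3 := by simp [hY]
  have hw0eq : (1 : R) - (w 1 + w 2 + w 3) = q - q * (w 1 + w 2 + w 3) := by
    conv_lhs => rw [← hsum4]
    rw [hx0, hxw 1 (by decide), hxw 2 (by decide), hxw 3 (by decide), mul_add, mul_add]
    abel
  have hp1p : p * (1 - p) = 0 := by rw [mul_sub, mul_one, hp.eq, sub_self]
  have hpw0 : p * (1 - (w 1 + w 2 + w 3)) = 1 - (w 1 + w 2 + w 3) := by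
    rw [hw0eq, mul_sub, ← mul_assoc, hpq]
  have hpw1 : p * w 1 = w 1 := by
    show p * (Y 1 * x 1) = Y 1 * x 1
    rw [hY1, hy1, ← mul_assoc, ← mul_assoc, hpa]
  have hpw2 : p * w 2 = w 2 := by
    show p * (Y 2 * x 2) = Y 2 * x 2
    rw [hY2, hy2, ← mul_assoc, ← mul_assoc, hpb]
  have hpw3 : p * w 3 = 0 := by
    show p * (Y 3 * x 3) = 0
    rw [hY3, hy3, ← mul_assoc, ← mul_assoc, hp1p, zero_mul, zero_mul]
  have hpsum : p = (1 - (w 1 + w 2 + w 3)) + w 1 + w 2 := by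
    have hone : (1 : R) = (1 - (w 1 + w 2 + w 3)) + w 1 + w 2 + w 3 := by abel
    calc p = p * 1 := (mul_one p).symm
      _ = p * ((1 - (w 1 + w 2 + w 3)) + w 1 + w 2 + w 3) := by conv_lhs => rw [hone]
      _ = p * (1 - (w 1 + w 2 + w 3)) + p * w 1 + p * w 2 + p * w 3 := by noncomm_ring
      _ = (1 - (w 1 + w 2 + w 3)) + w 1 + w 2 := by
          rw [hpw0, hpw1, hpw2, hpw3, add_zero]
  -- the answer
  refine ⟨1 - w 2 - w 3, w 2, ?_, h22, ?_, ?_, ?_, ?_, ?_, ?_⟩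
  · show (1 - w 2 - w 3) * (1 - w 2 - w 3) = 1 - w 2 - w 3
    simp only [sub_mul, mul_sub, one_mul, mul_one, h22, h23, h32, h33]
    abel
  · show (1 - w 2 - w 3) * w 2 = 0
    rw [sub_mul, sub_mul, one_mul, h22, h32, sub_zero, sub_self]
  · show w 2 * (1 - w 2 - w 3) = 0
    rw [mul_sub, mul_sub, mul_one, h22, h23, sub_zero, sub_self]
  · have hw1a : w 1 ∈ (span Rᵐᵒᵖ {a} : Submodule Rᵐᵒᵖ R) := by
      refine memS.mpr ⟨r1 * x 1, ?_⟩
      show Y 1 * x 1 = a * (r1 * x 1)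
      rw [hY1, hy1, mul_assoc]
    have he : (1 : R) - w 2 - w 3 = (q - q * (w 1 + w 2 + w 3)) + w 1 := by
      rw [← hw0eq]; abel
    rw [he]
    exact add_mem (sub_mem hqa (mulr hqa _)) hw1a
  · refine memS.mpr ⟨r2 * x 2, ?_⟩
    show Y 2 * x 2 = b * (r2 * x 2)
    rw [hY2, hy2, mul_assoc]
  · rw [hpsum]; abel
  · have heq : (1 - w 2 - w 3) * q = q := by
      rw [sub_mul, sub_mul, one_mul, hwq 2 (by decide), hwq 3 (by decide), sub_zero, sub_zero]
    exact memS.mpr ⟨q, heq.symm⟩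

end Aux

open ExchAux in
theorem exchange_orthogonal_idempotent_decomposition {R : Type*} [Ring R]
    (hR : ExchangeRing R) (a b p : R) (hp : IsIdempotentElem p)
    (hab : (span Rᵐᵒᵖ {a} : Submodule Rᵐᵒᵖ R) ⊔ span Rᵐᵒᵖ {b} = span Rᵐᵒᵖ {p}) :
    (∃ e f : R, IsIdempotentElem e ∧ IsIdempotentElem f ∧ e * f = 0 ∧ f * e = 0 ∧
      e ∈ span Rᵐᵒᵖ {a} ∧ f ∈ span Rᵐᵒᵖ {b} ∧ e + f = p) ∧
    (∀ q : R, IsIdempotentElem q → q ∈ span Rᵐᵒᵖ {a} →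
      ∃ e f : R, IsIdempotentElem e ∧ IsIdempotentElem f ∧ e * f = 0 ∧ f * e = 0 ∧
        e ∈ span Rᵐᵒᵖ {a} ∧ f ∈ span Rᵐᵒᵖ {b} ∧ e + f = p ∧ q ∈ span Rᵐᵒᵖ {e}) ∧
    ((∃ Y : Submodule Rᵐᵒᵖ R, IsCompl (span Rᵐᵒᵖ {a}) Y) →
      ∃ e f : R, IsIdempotentElem e ∧ IsIdempotentElem f ∧ e * f = 0 ∧ f * e = 0 ∧
        e ∈ span Rᵐᵒᵖ {a} ∧ f ∈ span Rᵐᵒᵖ {b} ∧ e + f = p ∧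
        (span Rᵐᵒᵖ {e} : Submodule Rᵐᵒᵖ R) = span Rᵐᵒᵖ {a}) := by
  refine ⟨?_, ?_, ?_⟩
  · obtain ⟨e, f, h1, h2, h3, h4, h5, h6, h7, -⟩ :=
      core hR a b p hp hab 0 (by simp [IsIdempotentElem]) (zero_mem _)
    exact ⟨e, f, h1, h2, h3, h4, h5, h6, h7⟩
  · intro q hq hqa
    exact core hR a b p hp hab q hq hqa
  · rintro ⟨Y, hY⟩
    -- produce an idempotent generator of aR
    obtain ⟨e₀, he₀a, y, hyY, hey⟩ := Submodule.mem_sup.mp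
      (hY.sup_eq_top ▸ Submodule.mem_top : (1 : R) ∈ (span Rᵐᵒᵖ {a} : Submodule Rᵐᵒᵖ R) ⊔ Y)
    have hfix : ∀ z ∈ (span Rᵐᵒᵖ {a} : Submodule Rᵐᵒᵖ R), e₀ * z = z := by
      intro z hz
      have h1 : e₀ * z + y * z = z := by
        rw [← add_mul, hey, one_mul]
      have h2 : y * z ∈ (span Rᵐᵒᵖ {a} : Submodule Rᵐᵒᵖ R) := by
        rw [show y * z = z - e₀ * z by rw [eq_sub_iff_add_eq, add_comm]; exact h1]
        exact sub_mem hz (mulr he₀a z)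
      have h3 : y * z = 0 :=
        Submodule.disjoint_def.mp hY.disjoint _ h2 (mulr hyY z)
      rw [h3, add_zero] at h1
      exact h1
    have hq : IsIdempotentElem e₀ := hfix e₀ he₀a
    obtain ⟨e, f, h1, h2, h3, h4, h5, h6, h7, h8⟩ := core hR a b p hp hab e₀ hq he₀a
    refine ⟨e, f, h1, h2, h3, h4, h5, h6, h7, le_antisymm ?_ ?_⟩
    · rw [Submodule.span_le, Set.singleton_subset_iff]
      exact h5
    · intro z hz
      obtain ⟨r, hr⟩ := memS.mp h8
      rw [← hfix z hz, hr]
      exact memS.mpr ⟨r * z, by rw [mul_assoc]⟩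
end

section
/- Let R be a ring of stable rank 1. Then every matrix X ∈ GL₂(R) can be reduced to a diagonal matrix by at most three elementary column operations: explicitly, there exist x, y, z ∈ R such that X·E₂₁(x)·E₁₂(y)·E₂₁(z) is a diagonal matrix (with unit diagonal entries). -/
/-- `R` has stable rank 1: whenever `aR + bR = R`, there is `x` with `a + bx` a unit. -/
def StableRankOne (R : Type*) [Ring R] : Prop :=
  ∀ a b : R, (∃ r s : R, a * r + b * s = 1) → ∃ x : R, IsUnit (a + b * x)

theorem tri_unit {R : Type*} [Ring R] (u c d : R) (hu : IsUnit u)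
    (h : IsUnit (!![u, 0; c, d])) : IsUnit d := by
  obtain ⟨W, hW⟩ := h
  set N : Matrix (Fin 2) (Fin 2) R := (W⁻¹).val with hN
  have h1 : !![u, 0; c, d] * N = 1 := by rw [← hW]; exact W.mul_inv
  have h2 : N * !![u, 0; c, d] = 1 := by rw [← hW]; exact W.inv_mul
  have e01 : u * N 0 1 = 0 := by
    have := congrFun (congrFun h1 0) 1
    simpa [Matrix.mul_apply, Fin.sum_univ_two] using this
  have hN01 : N 0 1 = 0 := by
    obtain ⟨v, hv⟩ := hu
    have := congrArg (fun t => (↑v⁻¹ : R) * t) e01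
    simpa [← mul_assoc, ← hv] using this
  have e11 : c * N 0 1 + d * N 1 1 = 1 := by
    have := congrFun (congrFun h1 1) 1
    simpa [Matrix.mul_apply, Fin.sum_univ_two] using this
  have hdr : d * N 1 1 = 1 := by simpa [hN01] using e11
  have hdl : N 1 1 * d = 1 := by
    have := congrFun (congrFun h2 1) 1
    simpa [Matrix.mul_apply, Fin.sum_univ_two] using this
  exact ⟨⟨d, N 1 1, hdr, hdl⟩, rfl⟩

theorem elem12_isUnit {R : Type*} [Ring R] (y : R) :
    IsUnit (!![1, y; 0, 1] : Matrix (Fin 2) (Fin 2) R) := by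
  refine ⟨⟨!![1, y; 0, 1], !![1, -y; 0, 1], ?_, ?_⟩, rfl⟩ <;>
  · ext i j
    fin_cases i <;> fin_cases j <;>
      simp [Matrix.mul_apply, Fin.sum_univ_two, Matrix.one_apply]

theorem elem21_isUnit {R : Type*} [Ring R] (x : R) :
    IsUnit (!![1, 0; x, 1] : Matrix (Fin 2) (Fin 2) R) := by
  refine ⟨⟨!![1, 0; x, 1], !![1, 0; -x, 1], ?_, ?_⟩, rfl⟩ <;>
  · ext i j
    fin_cases i <;> fin_cases j <;>
      simp [Matrix.mul_apply, Fin.sum_univ_two, Matrix.one_apply]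

theorem diagonal_reduction_of_stableRankOne {R : Type*} [Ring R]
    (hR : StableRankOne R) (X : Matrix (Fin 2) (Fin 2) R) (hX : IsUnit X) :
    ∃ (x y z : R) (d₁ d₂ : Rˣ),
      X * !![1, 0; x, 1] * !![1, y; 0, 1] * !![1, 0; z, 1] =
        !![(d₁ : R), 0; 0, (d₂ : R)] := by
  have hX' := hX
  obtain ⟨U, hU⟩ := hX
  set N : Matrix (Fin 2) (Fin 2) R := (U⁻¹).val with hNdef
  have h1 : X * N = 1 := by rw [← hU]; exact U.mul_inv
  have hbez : X 0 0 * N 0 0 + X 0 1 * N 1 0 = 1 := by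
    have := congrFun (congrFun h1 0) 0
    simpa [Matrix.mul_apply, Fin.sum_univ_two, Matrix.one_apply] using this
  obtain ⟨x, hx⟩ := hR (X 0 0) (X 0 1) ⟨_, _, hbez⟩
  obtain ⟨u, hu⟩ := hx
  set y : R := -(↑u⁻¹ * X 0 1) with hy
  set c' : R := X 1 0 + X 1 1 * x with hc'
  set d' : R := (X 1 0 + X 1 1 * x) * y + X 1 1 with hd'
  have key : X * !![1, 0; x, 1] * !![1, y; 0, 1] = !![(u : R), 0; c', d'] := by
    rw [Matrix.eta_fin_two X]
    ext i j
    fin_cases i <;> fin_cases j <;>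
      simp [Matrix.mul_apply, Fin.sum_univ_two, hc', hd', hu, mul_add, mul_assoc]
    · rw [← hu, mul_neg, ← mul_assoc, u.mul_inv, one_mul, neg_add_cancel]
  have hMunit : IsUnit (!![(u : R), 0; c', d']) := by
    rw [← key]
    exact (hX'.mul (elem21_isUnit x)).mul (elem12_isUnit y)
  have hd'unit : IsUnit d' := tri_unit _ _ _ u.isUnit hMunit
  obtain ⟨v, hv⟩ := hd'unit
  refine ⟨x, y, -(↑v⁻¹ * c'), u, v, ?_⟩
  rw [key]
  ext i j
  fin_cases i <;> fin_cases j <;>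
    simp [Matrix.mul_apply, Fin.sum_univ_two]
  · rw [← hv, ← mul_assoc, v.mul_inv, one_mul, add_neg_cancel]
  · exact hv.symm
end

section
/- Let R be a ring. Every right unimodular row [a, b] ∈ R² (i.e., aR + bR = R) is completable to an invertible 2×2 matrix if and only if R is self-cancellative: for every finitely generated projective right R-module P, R² ≅ P ⊕ R implies P ≅ R. -/
universe u
open MulOpposite
variable {R : Type u} [Ring R]

def toLin2 (a b c d : R) : (R × R) →ₗ[Rᵐᵒᵖ] (R × R) where
  toFun p := (a * p.1 + b * p.2, c * p.1 + d * p.2)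
  map_add' p q := by
    refine Prod.ext ?_ ?_ <;> simp [mul_add] <;> abel
  map_smul' t p := by
    rw [← op_unop t]
    refine Prod.ext ?_ ?_ <;>
      simp [op_smul_eq_mul, mul_assoc, add_mul]

@[simp] lemma toLin2_apply (a b c d x y : R) :
    toLin2 a b c d (x, y) = (a * x + b * y, c * x + d * y) := rfl

lemma linEq_of_basis {M : Type u} [AddCommGroup M] [Module Rᵐᵒᵖ M]
    (f g : (R × R) →ₗ[Rᵐᵒᵖ] M)
    (h1 : f (1,0) = g (1,0)) (h2 : f (0,1) = g (0,1)) : f = g := by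
  apply LinearMap.ext
  rintro ⟨x, y⟩
  have : ((x : R), (y : R)) = (op x) • ((1:R), (0:R)) + (op y) • ((0:R), (1:R)) := by
    simp [op_smul_eq_mul, Prod.ext_iff]
  rw [this, map_add, map_smul, map_smul, map_add, map_smul, map_smul, h1, h2]

lemma eq_toLin2 (f : (R × R) →ₗ[Rᵐᵒᵖ] (R × R)) :
    f = toLin2 (f (1,0)).1 (f (0,1)).1 (f (1,0)).2 (f (0,1)).2 := by
  apply linEq_of_basis <;> simp

lemma toLin2_comp (a b c d a' b' c' d' : R) :
    (toLin2 a b c d).comp (toLin2 a' b' c' d') =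
      toLin2 (a*a'+b*c') (a*b'+b*d') (c*a'+d*c') (c*b'+d*d') := by
  apply linEq_of_basis <;> simp [mul_add, add_mul, mul_assoc]

lemma toLin2_id : toLin2 (1:R) 0 0 1 = LinearMap.id := by
  apply linEq_of_basis <;> simp

lemma toLin2_inj {a b c d a' b' c' d' : R}
    (h : toLin2 a b c d = toLin2 a' b' c' d') :
    a = a' ∧ b = b' ∧ c = c' ∧ d = d' := by
  have h1 := congrArg (fun f : (R × R) →ₗ[Rᵐᵒᵖ] (R × R) => f (1,0)) h
  have h2 := congrArg (fun f : (R × R) →ₗ[Rᵐᵒᵖ] (R × R) => f (0,1)) h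
  simp [Prod.ext_iff] at h1 h2
  exact ⟨h1.1, h2.1, h1.2, h2.2⟩

lemma isUnit_matrix_of_equiv (Ψ : (R × R) ≃ₗ[Rᵐᵒᵖ] (R × R)) :
    IsUnit !![(Ψ (1,0)).1, (Ψ (0,1)).1; (Ψ (1,0)).2, (Ψ (0,1)).2] := by
  set a := (Ψ (1,0)).1; set b := (Ψ (0,1)).1
  set c := (Ψ (1,0)).2; set d := (Ψ (0,1)).2
  set a' := (Ψ.symm (1,0)).1; set b' := (Ψ.symm (0,1)).1
  set c' := (Ψ.symm (1,0)).2; set d' := (Ψ.symm (0,1)).2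
  have hΨ : Ψ.toLinearMap = toLin2 a b c d := eq_toLin2 _
  have hΨ' : Ψ.symm.toLinearMap = toLin2 a' b' c' d' := eq_toLin2 _
  have hcomp1 : Ψ.toLinearMap.comp Ψ.symm.toLinearMap = LinearMap.id := by
    ext x <;> simp
  have hcomp2 : Ψ.symm.toLinearMap.comp Ψ.toLinearMap = LinearMap.id := by
    ext x <;> simp
  rw [hΨ, hΨ', toLin2_comp, ← toLin2_id] at hcomp1 hcomp2
  obtain ⟨e11, e12, e21, e22⟩ := toLin2_inj hcomp1
  obtain ⟨f11, f12, f21, f22⟩ := toLin2_inj hcomp2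
  refine isUnit_iff_exists.mpr ⟨!![a', b'; c', d'], ?_, ?_⟩
  · rw [Matrix.mul_fin_two, Matrix.one_fin_two, e11, e12, e21, e22]
  · rw [Matrix.mul_fin_two, Matrix.one_fin_two, f11, f12, f21, f22]

lemma exists_equiv_of_isUnit {a b c d : R} (h : IsUnit !![a, b; c, d]) :
    ∃ Ψ : (R × R) ≃ₗ[Rᵐᵒᵖ] (R × R), Ψ.toLinearMap = toLin2 a b c d := by
  obtain ⟨N, hMN, hNM⟩ := isUnit_iff_exists.mp h
  rw [Matrix.eta_fin_two N] at hMN hNM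
  rw [Matrix.mul_fin_two, Matrix.one_fin_two] at hMN hNM
  set a' := N 0 0; set b' := N 0 1; set c' := N 1 0; set d' := N 1 1
  have e1 : (toLin2 a b c d).comp (toLin2 a' b' c' d') = LinearMap.id := by
    rw [toLin2_comp, ← toLin2_id]
    have h00 := congrFun (congrFun hMN 0) 0
    have h01 := congrFun (congrFun hMN 0) 1
    have h10 := congrFun (congrFun hMN 1) 0
    have h11 := congrFun (congrFun hMN 1) 1
    simp at h00 h01 h10 h11
    rw [h00, h01, h10, h11]
  have e2 : (toLin2 a' b' c' d').comp (toLin2 a b c d) = LinearMap.id := by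
    rw [toLin2_comp, ← toLin2_id]
    have h00 := congrFun (congrFun hNM 0) 0
    have h01 := congrFun (congrFun hNM 0) 1
    have h10 := congrFun (congrFun hNM 1) 0
    have h11 := congrFun (congrFun hNM 1) 1
    simp at h00 h01 h10 h11
    rw [h00, h01, h10, h11]
  exact ⟨LinearEquiv.ofLinear _ _ e1 e2, rfl⟩

def toRow (a b : R) : (R × R) →ₗ[Rᵐᵒᵖ] R where
  toFun p := a * p.1 + b * p.2
  map_add' p q := by simp [mul_add]; abel
  map_smul' t p := by
    rw [← op_unop t]
    simp [op_smul_eq_mul, mul_assoc, add_mul]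

@[simp] lemma toRow_apply (a b x y : R) : toRow a b (x, y) = a * x + b * y := rfl

lemma eq_toRow (f : (R × R) →ₗ[Rᵐᵒᵖ] R) : f = toRow (f (1,0)) (f (0,1)) := by
  apply linEq_of_basis <;> simp

theorem forward_dir (R : Type u) [Ring R]
    (h : ∀ a b : R, (∃ r s : R, a * r + b * s = 1) →
      ∃ c d : R, IsUnit (!![a, b; c, d]))
    (P : Type u) [AddCommGroup P] [Module Rᵐᵒᵖ P]
    (hfin : Module.Finite Rᵐᵒᵖ P) (hproj : Module.Projective Rᵐᵒᵖ P)
    (he : Nonempty ((R × R) ≃ₗ[Rᵐᵒᵖ] P × R)) : Nonempty (P ≃ₗ[Rᵐᵒᵖ] R) := by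
  obtain ⟨e⟩ := he
  set π : (R × R) →ₗ[Rᵐᵒᵖ] R := (LinearMap.snd Rᵐᵒᵖ P R).comp e.toLinearMap with hπdef
  set a := π (1,0) with ha
  set b := π (0,1) with hb
  have hπ : ∀ x y : R, π (x, y) = a * x + b * y := by
    intro x y
    conv_lhs => rw [eq_toRow π]
    simp
    rfl
  -- unimodularity
  have hunim : ∃ r s : R, a * r + b * s = 1 := by
    refine ⟨(e.symm (0,1)).1, (e.symm (0,1)).2, ?_⟩
    have : ((e.symm (0,1)).1, (e.symm (0,1)).2) = e.symm (0,1) := rfl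
    rw [← hπ, this]
    simp [hπdef]
  obtain ⟨c, d, hM⟩ := h a b hunim
  obtain ⟨Ψ, hΨ⟩ := exists_equiv_of_isUnit hM
  have hΨ1 : ∀ q : R × R, (Ψ q).1 = π q := by
    rintro ⟨x, y⟩
    have : Ψ (x, y) = toLin2 a b c d (x, y) := by rw [← hΨ]; rfl
    rw [this, hπ]
    simp
  -- the maps
  set f : P →ₗ[Rᵐᵒᵖ] R :=
    (LinearMap.snd Rᵐᵒᵖ R R).comp (Ψ.toLinearMap.comp
      (e.symm.toLinearMap.comp (LinearMap.inl Rᵐᵒᵖ P R))) with hf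
  set g : R →ₗ[Rᵐᵒᵖ] P :=
    (LinearMap.fst Rᵐᵒᵖ P R).comp (e.toLinearMap.comp
      (Ψ.symm.toLinearMap.comp (LinearMap.inr Rᵐᵒᵖ R R))) with hg
  have hfg : ∀ t : R, f (g t) = t := by
    intro t
    set q := Ψ.symm (0, t) with hq
    have h1 : (e q).2 = 0 := by
      have : π q = (Ψ q).1 := (hΨ1 q).symm
      simp [hπdef] at this ⊢
      rw [this, hq]
      simp
    have h2 : ((e q).1, (0:R)) = e q := by
      rw [← h1]
    simp only [hf, hg, LinearMap.comp_apply, LinearMap.inl_apply, LinearMap.inr_apply,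
      LinearMap.fst_apply, LinearMap.snd_apply, LinearEquiv.coe_coe]
    rw [show ((((e (Ψ.symm (0,t)))).1 : P), (0:R)) = e q from h2]
    simp [hq]
  have hgf : ∀ p : P, g (f p) = p := by
    intro p
    set q := e.symm (p, 0) with hq
    have h1 : (Ψ q).1 = 0 := by
      rw [hΨ1 q, hq]
      simp [hπdef]
    have h2 : ((0:R), (Ψ q).2) = Ψ q := by rw [← h1]
    simp only [hf, hg, LinearMap.comp_apply, LinearMap.inl_apply, LinearMap.inr_apply,
      LinearMap.fst_apply, LinearMap.snd_apply, LinearEquiv.coe_coe]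
    rw [show ((0:R), (Ψ (e.symm (p, 0))).2) = Ψ q from h2]
    simp [hq]
  refine ⟨LinearEquiv.ofLinear f g ?_ ?_⟩
  · apply LinearMap.ext; intro t
    simp only [LinearMap.comp_apply, LinearMap.id_apply, hfg]
  · apply LinearMap.ext; intro p
    simp only [LinearMap.comp_apply, LinearMap.id_apply, hgf]

/-- R ≃ₗ[Rᵐᵒᵖ] Rᵐᵒᵖ -/
def opEquiv' : R ≃ₗ[Rᵐᵒᵖ] Rᵐᵒᵖ where
  toFun := op
  invFun := unop
  left_inv x := rfl
  right_inv x := rfl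
  map_add' x y := rfl
  map_smul' t x := by
    rw [← op_unop t]
    simp [op_smul_eq_mul, smul_eq_mul]

theorem backward_dir (R : Type u) [Ring R]
    (hc : ∀ (P : Type u) [AddCommGroup P] [Module Rᵐᵒᵖ P],
      Module.Finite Rᵐᵒᵖ P → Module.Projective Rᵐᵒᵖ P →
      Nonempty ((R × R) ≃ₗ[Rᵐᵒᵖ] P × R) → Nonempty (P ≃ₗ[Rᵐᵒᵖ] R))
    (a b : R) (hu : ∃ r s : R, a * r + b * s = 1) :
    ∃ c d : R, IsUnit (!![a, b; c, d]) := by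
  obtain ⟨r, s, hrs⟩ := hu
  set π : (R × R) →ₗ[Rᵐᵒᵖ] R := toRow a b with hπdef
  -- the section
  set σ : R →ₗ[Rᵐᵒᵖ] (R × R) :=
    { toFun := fun t => (r * t, s * t)
      map_add' := fun x y => by refine Prod.ext ?_ ?_ <;> simp [mul_add]
      map_smul' := fun t x => by
        rw [← op_unop t]
        refine Prod.ext ?_ ?_ <;> simp [op_smul_eq_mul, mul_assoc] } with hσdef
  have hπσ : ∀ t : R, π (σ t) = t := by
    intro t
    show a * (r * t) + b * (s * t) = t
    rw [← mul_assoc, ← mul_assoc, ← add_mul, hrs, one_mul]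
  set K := LinearMap.ker π
  -- splitting maps
  have hmem : ∀ x : R × R, x - σ (π x) ∈ K := by
    intro x
    simp only [K, LinearMap.mem_ker, map_sub]
    rw [hπσ, sub_self]
  set ρ : (R × R) →ₗ[Rᵐᵒᵖ] K :=
    LinearMap.codRestrict K (LinearMap.id - σ.comp π) (fun x => hmem x) with hρdef
  have hρ_apply : ∀ x : R × R, (ρ x : R × R) = x - σ (π x) := fun x => rfl
  have hρσ : ∀ p : K, ρ (p : R × R) = p := by
    intro p
    apply Subtype.ext
    rw [hρ_apply]
    have : π (p : R × R) = 0 := p.2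
    rw [this, map_zero, sub_zero]
  -- K is finite and projective
  have hKproj : Module.Projective Rᵐᵒᵖ K := by
    have : Module.Projective Rᵐᵒᵖ (R × R) :=
      Module.Projective.of_equiv (LinearEquiv.prodCongr (opEquiv' (R := R)) (opEquiv' (R := R))).symm
    exact Module.Projective.of_split K.subtype ρ (by
      apply LinearMap.ext; intro p
      simp only [LinearMap.comp_apply, LinearMap.id_apply, Submodule.subtype_apply]
      exact hρσ p)
  have hKfin : Module.Finite Rᵐᵒᵖ K := by
    have : Module.Finite Rᵐᵒᵖ (R × R) :=
      Module.Finite.equiv (LinearEquiv.prodCongr (opEquiv' (R := R)) (opEquiv' (R := R))).symm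
    exact Module.Finite.of_surjective ρ (fun p => ⟨(p : R × R), hρσ p⟩)
  -- the splitting equivalence R² ≃ K × R
  set F : (R × R) →ₗ[Rᵐᵒᵖ] K × R := ρ.prod π with hF
  set G : K × R →ₗ[Rᵐᵒᵖ] (R × R) := K.subtype.comp (LinearMap.fst Rᵐᵒᵖ K R)
      + σ.comp (LinearMap.snd Rᵐᵒᵖ K R) with hG
  have hGF : G.comp F = LinearMap.id := by
    apply LinearMap.ext; intro x
    simp only [hF, hG, LinearMap.comp_apply, LinearMap.prod_apply, LinearMap.add_apply,
      LinearMap.fst_apply, LinearMap.snd_apply, Submodule.subtype_apply, Function.prod,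
      LinearMap.id_apply]
    rw [hρ_apply]
    abel
  have hFG : F.comp G = LinearMap.id := by
    apply LinearMap.ext; rintro ⟨⟨p, hp⟩, t⟩
    have hπp : π p = 0 := hp
    have hG1 : G (⟨p, hp⟩, t) = p + σ t := by
      simp only [hG, LinearMap.add_apply, LinearMap.comp_apply, LinearMap.fst_apply,
        LinearMap.snd_apply, Submodule.subtype_apply]
    simp only [LinearMap.comp_apply, LinearMap.id_apply, hG1, hF, LinearMap.prod_apply, Function.prod]
    refine Prod.ext (Subtype.ext ?_) ?_
    · rw [hρ_apply, map_add, hπp, zero_add, hπσ, add_sub_cancel_right]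
    · show π (p + σ t) = t
      rw [map_add, hπp, zero_add, hπσ]
  set e : (R × R) ≃ₗ[Rᵐᵒᵖ] K × R := LinearEquiv.ofLinear F G hFG hGF with he
  obtain ⟨g⟩ := hc K hKfin hKproj ⟨e⟩
  -- assemble the full automorphism of R²
  set Ψ : (R × R) ≃ₗ[Rᵐᵒᵖ] (R × R) :=
    e ≪≫ₗ (LinearEquiv.prodCongr g (LinearEquiv.refl Rᵐᵒᵖ R)) ≪≫ₗ (LinearEquiv.prodComm Rᵐᵒᵖ R R) with hΨ
  have hΨ1 : ∀ x : R × R, (Ψ x).1 = π x := by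
    intro x
    simp [hΨ, he, hF, LinearEquiv.prodComm]
    rfl
  refine ⟨(Ψ (1,0)).2, (Ψ (0,1)).2, ?_⟩
  have := isUnit_matrix_of_equiv Ψ
  rwa [show (Ψ (1,0)).1 = a by rw [hΨ1]; show a * 1 + b * 0 = a; simp,
    show (Ψ (0,1)).1 = b by rw [hΨ1]; show a * 0 + b * 1 = b; simp] at this

theorem completable_iff_selfCancellative (R : Type u) [Ring R] :
    (∀ a b : R, (∃ r s : R, a * r + b * s = 1) →
      ∃ c d : R, IsUnit (!![a, b; c, d])) ↔
    (∀ (P : Type u) [AddCommGroup P] [Module Rᵐᵒᵖ P],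
      Module.Finite Rᵐᵒᵖ P → Module.Projective Rᵐᵒᵖ P →
      Nonempty ((R × R) ≃ₗ[Rᵐᵒᵖ] P × R) → Nonempty (P ≃ₗ[Rᵐᵒᵖ] R)) := by
  constructor
  · intro h P _ _ hfin hproj he
    exact forward_dir R h P hfin hproj he
  · intro hc a b hu
    exact backward_dir R hc a b hu
end

section
/- Let M be the commutative additive monoid generated by two elements u and x subject to the relations u + x = u and x + x = x. Then every element of M is uniquely one of x or k·u for k ∈ ℤ≥0; in particular M is conical (y + z = 0 implies y = z = 0), x ≠ 0, and the multiples of u are pairwise distinct and distinct from x (except that 0·u = 0 ≠ x). -/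
/-- The relations `u + x = u` and `x + x = x` on the free commutative monoid `ℕ × ℕ`
on two generators `u = (1,0)` and `x = (0,1)`. -/
def monoidRel : ℕ × ℕ → ℕ × ℕ → Prop := fun p q =>
  (p = (1, 1) ∧ q = (1, 0)) ∨ (p = (0, 2) ∧ q = (0, 1))

/-- `M` is the commutative monoid generated by `u, x` subject to `u + x = u`
and `x + x = x`. -/
def M : Type := (addConGen monoidRel).Quotient

instance : AddCommMonoid M := by unfold M; infer_instance

/-- The generator `u`. -/
def ugen : M := AddCon.toQuotient (c := addConGen monoidRel) (1, 0)

/-- The generator `x`. -/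
def xgen : M := AddCon.toQuotient (c := addConGen monoidRel) (0, 1)

/-- Normal form on the free monoid. -/
def nf : ℕ × ℕ → ℕ × ℕ := fun p => (p.1, if p.1 = 0 then min p.2 1 else 0)

/-- The congruence "equal normal forms". -/
def nfCon : AddCon (ℕ × ℕ) where
  r p q := nf p = nf q
  iseqv := ⟨fun _ => rfl, Eq.symm, Eq.trans⟩
  add' := by
    intro p q p' q' h h'
    simp only [nf, Prod.ext_iff, Prod.mk_add_mk, Prod.fst_add, Prod.snd_add] at *
    obtain ⟨h1, h2⟩ := h
    obtain ⟨h1', h2'⟩ := h'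
    constructor
    · omega
    · split_ifs at * <;> omega

lemma nf_of_rel {p q : ℕ × ℕ} (h : addConGen monoidRel p q) : nf p = nf q := by
  have hle : addConGen monoidRel ≤ nfCon :=
    AddCon.addConGen_le.2 (by rintro p q (⟨rfl, rfl⟩ | ⟨rfl, rfl⟩) <;> rfl)
  exact hle h

lemma smul_ugen (k : ℕ) : k • ugen = AddCon.toQuotient (c := addConGen monoidRel) (k, 0) := by
  induction k with
  | zero => rfl
  | succ n ih =>
      rw [succ_nsmul, ih]
      show AddCon.toQuotient ((n, 0) + (1, 0)) = _
      norm_num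

lemma quot_eq {p q : ℕ × ℕ} (h : addConGen monoidRel p q) :
    AddCon.toQuotient (c := addConGen monoidRel) p = AddCon.toQuotient q :=
  (AddCon.eq _).2 h

theorem normal_form_and_conical :
    (∀ m : M, m = xgen ∨ ∃ k : ℕ, m = k • ugen) ∧
    (xgen ≠ 0) ∧
    (∀ k l : ℕ, k • ugen = l • ugen → k = l) ∧
    (∀ k : ℕ, k • ugen ≠ xgen) ∧
    (∀ y z : M, y + z = 0 → y = 0 ∧ z = 0) := by
  have key : ∀ p q : ℕ × ℕ,
      AddCon.toQuotient (c := addConGen monoidRel) p = AddCon.toQuotient q → nf p = nf q := by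
    intro p q h
    exact nf_of_rel ((AddCon.eq _).1 h)
  -- reduction: (a, b+1) ~ (a, b) when b ≥ 1 or a ≥ 1
  have step : ∀ a b : ℕ, 1 ≤ a + b →
      AddCon.toQuotient (c := addConGen monoidRel) (a, b + 1)
        = AddCon.toQuotient (a, b) := by
    intro a b hab
    rcases Nat.eq_zero_or_pos a with ha | ha
    case inr =>
      have : (a, b + 1) = (a - 1, b) + (1, 1) ∧ (a, b) = (a - 1, b) + (1, 0) := by
        constructor <;> · simp [Prod.ext_iff]; omega
      rw [this.1, this.2]
      show AddCon.toQuotient (a-1, b) + AddCon.toQuotient (1,1)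
        = AddCon.toQuotient (a-1, b) + AddCon.toQuotient (1,0)
      rw [quot_eq (AddConGen.Rel.of _ _ (Or.inl ⟨rfl, rfl⟩))]
    case inl =>
      subst ha
      have hb : 1 ≤ b := by omega
      have : ((0:ℕ), b + 1) = (0, b - 1) + (0, 2) ∧ ((0:ℕ), b) = (0, b - 1) + (0, 1) := by
        constructor <;> · simp [Prod.ext_iff]; omega
      rw [this.1, this.2]
      show AddCon.toQuotient ((0:ℕ), b-1) + AddCon.toQuotient ((0:ℕ),2)
        = AddCon.toQuotient ((0:ℕ), b-1) + AddCon.toQuotient ((0:ℕ),1)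
      rw [quot_eq (AddConGen.Rel.of _ _ (Or.inr ⟨rfl, rfl⟩))]
  have reduce : ∀ a b : ℕ, AddCon.toQuotient (c := addConGen monoidRel) (a, b)
      = AddCon.toQuotient (nf (a, b)) := by
    intro a b
    induction b with
    | zero => simp [nf]
    | succ n ih =>
        rcases Nat.eq_zero_or_pos (a + n) with h | h
        · have : a = 0 ∧ n = 0 := by omega
          obtain ⟨rfl, rfl⟩ := this
          rfl
        · rw [step a n h, ih]
          have hnf : nf (a, n) = nf (a, n + 1) := by
            simp only [nf, Prod.mk.injEq, true_and]
            split_ifs <;> omega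
          rw [hnf]
  refine ⟨?_, ?_, ?_, ?_, ?_⟩
  · intro m
    induction m using Quotient.ind with
    | _ p =>
      obtain ⟨a, b⟩ := p
      rcases Nat.eq_zero_or_pos a with rfl | ha
      · rcases Nat.eq_zero_or_pos b with rfl | hb
        · exact Or.inr ⟨0, rfl⟩
        · left
          show AddCon.toQuotient ((0:ℕ), b) = xgen
          rw [reduce]
          have : nf (0, b) = (0, 1) := by simp [nf]; omega
          rw [this]; rfl
      · right
        refine ⟨a, ?_⟩
        show AddCon.toQuotient (a, b) = a • ugen
        rw [smul_ugen, reduce]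
        have : nf (a, b) = (a, 0) := by simp [nf]; omega
        rw [this]
  · intro h
    have := key _ _ h
    simp [nf] at this
  · intro k l h
    rw [smul_ugen, smul_ugen] at h
    have := key _ _ h
    simpa [nf, Prod.ext_iff] using this
  · intro k h
    rw [smul_ugen] at h
    have := key _ _ h
    simp only [nf, Prod.mk.injEq] at this
    split_ifs at this <;> omega
  · intro y z hyz
    induction y using Quotient.ind with
    | _ p =>
    induction z using Quotient.ind with
    | _ q =>
      have : AddCon.toQuotient (c := addConGen monoidRel) (p + q) = AddCon.toQuotient (0 : ℕ × ℕ) := hyz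
      have h := key _ _ this
      have hp : p = 0 ∧ q = 0 := by
        obtain ⟨a, b⟩ := p; obtain ⟨c, d⟩ := q
        simp [nf, Prod.ext_iff] at h ⊢
        omega
      rw [hp.1, hp.2]
      exact ⟨rfl, rfl⟩
end
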